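/- arXiv:1902.10041 — 5 statements merged into one kernel-verified Lean document; each statement's English description precedes it below -/
import Mathlib

section
/- The default fairness condition is eventual: for every protocol (assuming packet identities range over a fixed countable set, so that only countably many configurations are reachable from any configuration), every finite execution can be continued to an infinite execution satisfying the default fairness condition. -/
open scoped Classical

/-- A configuration: finitely many agents (identified by natural numbers) with states in `Q`,
and finitely many packets (identified by natural numbers) carrying messages in `M`.
`agentState a = none` means `a` is not an agent of the configuration, and similarly
`packetMsg p = none` means `p` is not a packet of the configuration. -/
structure Config (Q : Type) (M : Type) where
  agentState : ℕ → Option Q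
  packetMsg : ℕ → Option M
  finAgents : {a : ℕ | agentState a ≠ none}.Finite
  finPackets : {p : ℕ | packetMsg p ≠ none}.Finite

namespace Config

variable {Q M : Type}

/-- The set `Dom(C_A)` of agents of a configuration. -/
def agentsDom (C : Config Q M) : Set ℕ := {a | C.agentState a ≠ none}

/-- The set `Dom(C_P)` of packets of a configuration. -/
def packetsDom (C : Config Q M) : Set ℕ := {p | C.packetMsg p ≠ none}

/-- Update (add, change or remove) the state of agent `a`. -/
def setAgent (C : Config Q M) (a : ℕ) (s : Option Q) : Config Q M where
  agentState := Function.update C.agentState a s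
  packetMsg := C.packetMsg
  finAgents := by
    apply Set.Finite.subset (C.finAgents.union (Set.finite_singleton a))
    intro x hx
    rcases eq_or_ne x a with h | h
    · exact Or.inr h
    · exact Or.inl (by simpa [Function.update, h] using hx)
  finPackets := C.finPackets

/-- Update (add, change or remove) the content of packet `p`. -/
def setPacket (C : Config Q M) (p : ℕ) (m : Option M) : Config Q M where
  agentState := C.agentState
  packetMsg := Function.update C.packetMsg p m
  finAgents := C.finAgents
  finPackets := by
    apply Set.Finite.subset (C.finPackets.union (Set.finite_singleton p))
    intro x hx
    rcases eq_or_ne x p with h | h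
    · exact Or.inr h
    · exact Or.inl (by simpa [Function.update, h] using hx)

/-- Rename agents and packets by permutations of `ℕ`:
the agent `a` of the result is in the state of agent `πA a` of `C`. -/
def rename (C : Config Q M) (πA πP : Equiv.Perm ℕ) : Config Q M where
  agentState := fun a => C.agentState (πA a)
  packetMsg := fun p => C.packetMsg (πP p)
  finAgents := by
    have h : {a : ℕ | C.agentState (πA a) ≠ none} = πA ⁻¹' C.agentsDom := rfl
    rw [h]
    exact C.finAgents.preimage πA.injective.injOn
  finPackets := by
    have h : {p : ℕ | C.packetMsg (πP p) ≠ none} = πP ⁻¹' C.packetsDom := rfl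
    rw [h]
    exact C.finPackets.preimage πP.injective.injOn

/-- The number of agents of `C` in state `q`. -/
noncomputable def numInState (C : Config Q M) (q : Q) : ℕ :=
  {a | C.agentState a = some q}.ncard

/-- The number of packets of `C` carrying message `m` (the supply of `m` in `C`). -/
noncomputable def supply (C : Config Q M) (m : M) : ℕ :=
  {p | C.packetMsg p = some m}.ncard

end Config

/-- The type of step relations: `Step C A C'` states that there is a step
from `C` to `C'` whose set of active agents is `A`. -/
abbrev StepRel (Q M : Type) := Config Q M → Set ℕ → Config Q M → Prop

/-- The conditions that the step relation of a protocol must satisfy: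
agent conservation, agent and packet anonymity, possibility to ignore extra packets,
and possibility to add passive agents. -/
structure IsProtocolStep {Q M : Type} (Step : StepRel Q M) : Prop where
  active_subset : ∀ {C A C'}, Step C A C' → A ⊆ C.agentsDom
  agent_conservation : ∀ {C A C'}, Step C A C' → C.agentsDom = C'.agentsDom
  anonymity : ∀ (πA πP : Equiv.Perm ℕ) {C A C'}, Step C A C' →
    Step (C.rename πA πP) (πA ⁻¹' A) (C'.rename πA πP)
  ignore_packets : ∀ {C A C'} (p : ℕ) (m : M), Step C A C' →
    C.packetMsg p = none → C'.packetMsg p = none →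
    Step (C.setPacket p (some m)) A (C'.setPacket p (some m))
  add_passive : ∀ {C A C'} (a : ℕ) (q : Q), Step C A C' →
    C.agentState a = none → C'.agentState a = none →
    ∃ q' : Q, Step (C.setAgent a (some q)) A (C'.setAgent a (some q'))

/-- `C → C'` : a step from `C` to `C'` with some set of active agents. -/
def stepTo {Q M : Type} (Step : StepRel Q M) (C C' : Config Q M) : Prop := ∃ A, Step C A C'

/-- Reachability via finitely many steps. -/
def Reaches {Q M : Type} (Step : StepRel Q M) : Config Q M → Config Q M → Prop :=
  Relation.ReflTransGen (stepTo Step)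

/-- An infinite execution: at each moment either nothing changes or a single step occurs. -/
def IsExecution {Q M : Type} (Step : StepRel Q M) (E : ℕ → Config Q M) : Prop :=
  ∀ i, E (i + 1) = E i ∨ stepTo Step (E i) (E (i + 1))

/-- A finite execution of length `n`, given by the first `n + 1` values of `E`. -/
def IsFinExecution {Q M : Type} (Step : StepRel Q M) (n : ℕ) (E : ℕ → Config Q M) : Prop :=
  ∀ i < n, E (i + 1) = E i ∨ stepTo Step (E i) (E (i + 1))

/-- The default fairness condition: every configuration either becomes unreachable from
some moment on, or occurs infinitely many times in the execution. -/
def DefaultFair {Q M : Type} (Step : StepRel Q M) (E : ℕ → Config Q M) : Prop :=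
  ∀ C : Config Q M,
    (∃ n, ∀ m, n ≤ m → ¬ Reaches Step (E m) C) ∨ (∀ n, ∃ m, n ≤ m ∧ E m = C)

/-- A fairness condition is eventual if every finite execution can be continued
to an infinite execution satisfying it. -/
def Eventual {Q M : Type} (Step : StepRel Q M) (Φ : (ℕ → Config Q M) → Prop) : Prop :=
  ∀ (n : ℕ) (E : ℕ → Config Q M), IsFinExecution Step n E →
    ∃ E' : ℕ → Config Q M, (∀ i ≤ n, E' i = E i) ∧ IsExecution Step E' ∧ Φ E'

/-- A fairness condition ensures activity if whenever an execution satisfying it is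
constant from some moment on, no step leads from the final configuration to a
different configuration. -/
def EnsuresActivity {Q M : Type} (Step : StepRel Q M) (Φ : (ℕ → Config Q M) → Prop) : Prop :=
  ∀ E, IsExecution Step E → Φ E → ∀ n, (∀ m, n ≤ m → E m = E n) →
    ∀ C', stepTo Step (E n) C' → C' = E n

/-- A protocol: input mapping, individual output function, step relation
and fairness condition (the finite sets of states `Q`, messages `M` and input
letters `Sg` are type parameters). -/
structure Protocol (Q M Sg : Type) where
  Iin : Sg → Q
  out : Q → Bool
  Step : StepRel Q M
  fair : (ℕ → Config Q M) → Prop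

/-- `C` is a consensus with output value `b`. -/
def IsConsensus {Q M : Type} (out : Q → Bool) (C : Config Q M) (b : Bool) : Prop :=
  ∀ a q, C.agentState a = some q → out q = b

/-- `C` is a stable consensus with output value `b`. -/
def IsStableConsensus {Q M : Type} (Step : StepRel Q M) (out : Q → Bool)
    (C : Config Q M) (b : Bool) : Prop :=
  ∀ D, Reaches Step C D → IsConsensus out D b

/-- `C` is an input configuration for the input `x` : no packets, and for every state `q`
exactly as many agents in `q` as prescribed by `x` and the input mapping. -/
def IsInputConfig {Q M Sg : Type} [Fintype Sg] (Iin : Sg → Q) (x : Sg → ℕ)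
    (C : Config Q M) : Prop :=
  (∀ p, C.packetMsg p = none) ∧
  ∀ q : Q, C.numInState q = ∑ σ : Sg, if Iin σ = q then x σ else 0

/-- The protocol `P` implements the predicate `φ` : every fair execution from an input
configuration for `x` reaches a stable consensus with output value `φ x`. -/
def Implements {Q M Sg : Type} [Fintype Sg] (P : Protocol Q M Sg)
    (φ : (Sg → ℕ) → Bool) : Prop :=
  ∀ (x : Sg → ℕ) (C0 : Config Q M), IsInputConfig P.Iin x C0 →
    ∀ E : ℕ → Config Q M, IsExecution P.Step E → P.fair E → E 0 = C0 →
      ∃ n, IsStableConsensus P.Step P.out (E n) (φ x)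

/-- The unreliable version of a step relation: every step `C --A--> C'` additionally
allows all degraded steps `C --A--> C''` satisfying population preservation,
state preservation, message preservation, and reliance on active agents. -/
def UnrelStep {Q M : Type} (Step : StepRel Q M) : StepRel Q M := fun C A C'' =>
  Step C A C'' ∨ ∃ C', Step C A C' ∧
    C''.agentsDom = C'.agentsDom ∧
    C''.packetMsg = C'.packetMsg ∧
    (∀ a, C''.agentState a = C.agentState a ∨ C''.agentState a = C'.agentState a) ∧
    ((∀ a ∉ A, C''.agentState a = C.agentState a) ∨
      (∀ a ∈ A, C''.agentState a = C'.agentState a))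

/-- The unreliable protocol corresponding to `P`. -/
def Unreliable {Q M Sg : Type} (P : Protocol Q M Sg) : Protocol Q M Sg :=
  { P with Step := UnrelStep P.Step }

/-- A shadow extension of the execution `E` around the agent `a`, using the fresh
agent `a'` : a set of executions starting from `E 0` with the extra agent `a'` added in
the state of `a`, such that removing `a'` from any of them yields `E`, and at every
moment some execution of the set has `a` and `a'` in the same state. -/
def IsShadowExtension {Q M : Type} (Step : StepRel Q M) (E : ℕ → Config Q M)
    (a a' : ℕ) (Ext : Set (ℕ → Config Q M)) : Prop :=
  a ∈ (E 0).agentsDom ∧ a' ∉ (E 0).agentsDom ∧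
  (∀ E' ∈ Ext, IsExecution Step E' ∧ (E' 0).agentState a' = (E 0).agentState a ∧
    ∀ k, (E' k).setAgent a' none = E k) ∧
  ∀ k, ∃ E' ∈ Ext, (E' k).agentState a' = (E' k).agentState a

/-- A protocol is shadow-permitting if from every configuration there is a fair
execution having a shadow extension around every agent. -/
def ShadowPermitting {Q M Sg : Type} (P : Protocol Q M Sg) : Prop :=
  ∀ C : Config Q M, ∃ E, IsExecution P.Step E ∧ E 0 = C ∧ P.fair E ∧
    ∀ a ∈ C.agentsDom, ∃ a' ∉ C.agentsDom,
      ∃ Ext, IsShadowExtension P.Step E a a' Ext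

/-- Truncatability with constant `K` : adding a fresh agent in a state already
represented by at least `K` agents of a stable consensus yields a stable consensus. -/
def TruncatableWith {Q M : Type} (Step : StepRel Q M) (out : Q → Bool) (K : ℕ) : Prop :=
  ∀ (C : Config Q M) (b : Bool) (q : Q), IsStableConsensus Step out C b →
    K ≤ C.numInState q → ∀ a', C.agentState a' = none →
      IsStableConsensus Step out (C.setAgent a' (some q)) b

/-- The cube with lower bounds `l` and (possibly infinite) upper bounds `u`. -/
def cube {Sg : Type} (l : Sg → ℕ) (u : Sg → ℕ∞) : Set (Sg → ℕ) :=
  {x | ∀ σ, l σ ≤ x σ ∧ (x σ : ℕ∞) ≤ u σ}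

/-- A counting set is a finite union of cubes. -/
def IsCountingSet {Sg : Type} (S : Set (Sg → ℕ)) : Prop :=
  ∃ (n : ℕ) (l : Fin n → Sg → ℕ) (u : Fin n → Sg → ℕ∞), S = ⋃ j, cube (l j) (u j)

/-- A counting predicate is the membership predicate of a counting set. -/
def IsCountingPred {Sg : Type} (φ : (Sg → ℕ) → Bool) : Prop :=
  IsCountingSet {x | φ x = true}

section FairEventualAux

variable {Q M : Type}

private lemma Config.ext' {C C' : Config Q M} (h1 : C.agentState = C'.agentState)
    (h2 : C.packetMsg = C'.packetMsg) : C = C' := by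
  cases C; cases C'; cases h1; cases h2; rfl

instance instNonemptyConfig : Nonempty (Config Q M) :=
  ⟨{ agentState := fun _ => none, packetMsg := fun _ => none,
     finAgents := by simp, finPackets := by simp }⟩

private lemma enc_sub {α : Type} {f g : ℕ → Option α} {hf : {x | f x ≠ none}.Finite}
    {hg : {x | g x ≠ none}.Finite}
    (h : hf.toFinset.image (fun x => (x, f x)) = hg.toFinset.image (fun x => (x, g x)))
    {x : ℕ} {a : α} (hx : f x = some a) : g x = some a := by
  have hm : (x, f x) ∈ hf.toFinset.image (fun x => (x, f x)) :=
    Finset.mem_image_of_mem _ (by rw [Set.Finite.mem_toFinset]; simp [hx])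
  rw [h] at hm
  obtain ⟨x', hx', heq⟩ := Finset.mem_image.mp hm
  have h1 : x' = x := congrArg Prod.fst heq
  have h2 : g x' = f x := congrArg Prod.snd heq
  rw [h1] at h2
  rw [h2, hx]

private lemma enc_inj {α : Type} {f g : ℕ → Option α} {hf : {x | f x ≠ none}.Finite}
    {hg : {x | g x ≠ none}.Finite}
    (h : hf.toFinset.image (fun x => (x, f x)) = hg.toFinset.image (fun x => (x, g x))) :
    f = g := by
  funext x
  rcases hfx : f x with _ | a
  · rcases hgx : g x with _ | a
    · rfl
    · have := enc_sub h.symm hgx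
      rw [hfx] at this
      exact this
  · exact (enc_sub h hfx).symm

instance instCountableConfig [Finite Q] [Finite M] : Countable (Config Q M) := by
  have hinj : Function.Injective (fun C : Config Q M =>
      ((C.finAgents.toFinset.image fun a => (a, C.agentState a)),
       (C.finPackets.toFinset.image fun p => (p, C.packetMsg p)))) := by
    intro C C' h
    have h1 := congrArg Prod.fst h
    have h2 := congrArg Prod.snd h
    simp only at h1 h2
    exact Config.ext' (enc_inj h1) (enc_inj h2)
  exact hinj.countable

private lemma exec_reaches {Step : StepRel Q M} {E : ℕ → Config Q M}
    (hE : IsExecution Step E) {t m : ℕ} (h : t ≤ m) : Reaches Step (E t) (E m) := by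
  induction m with
  | zero =>
    obtain rfl : t = 0 := Nat.le_zero.mp h
    exact Relation.ReflTransGen.refl
  | succ m ih =>
    rcases Nat.eq_or_lt_of_le h with rfl | h'
    · exact Relation.ReflTransGen.refl
    · have hr := ih (Nat.lt_succ_iff.mp h')
      rcases hE m with he | hs
      · rwa [he]
      · exact hr.tail hs

private lemma reaches_path {Step : StepRel Q M} {C C' : Config Q M} (h : Reaches Step C C') :
    ∃ (k : ℕ) (F : ℕ → Config Q M), F 0 = C ∧ F k = C' ∧ IsFinExecution Step k F := by
  induction h with
  | refl => exact ⟨0, fun _ => C, rfl, rfl, fun i hi => absurd hi (Nat.not_lt_zero i)⟩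
  | @tail b c hab hbc ih =>
    obtain ⟨k, F, h0, hk, hfin⟩ := ih
    refine ⟨k + 1, fun i => if i ≤ k then F i else c, by simp [h0], by simp, ?_⟩
    intro i hi
    rcases Nat.lt_or_ge i k with h' | h'
    · have h'' : i + 1 ≤ k := h'
      simpa [Nat.le_of_lt h', h''] using hfin i h'
    · have hik : i = k := by omega
      subst hik
      right
      simpa [hk] using hbc

private lemma extend_fair [Countable (Config Q M)]
    (Step : StepRel Q M) (n : ℕ) (E : ℕ → Config Q M) (hE : IsFinExecution Step n E) :
    ∃ E' : ℕ → Config Q M, (∀ i ≤ n, E' i = E i) ∧ IsExecution Step E' ∧ DefaultFair Step E' := by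
  obtain ⟨e, he⟩ := exists_surjective_nat (Config Q M)
  set tgt : ℕ → Config Q M := fun s => e (Nat.unpair s).1 with htgt_def
  set D : ℕ → Config Q M := fun s =>
    Nat.rec (E n) (fun s Ds => if Reaches Step Ds (tgt s) then tgt s else Ds) s with hD_def
  have hD0 : D 0 = E n := rfl
  have hDsucc : ∀ s, D (s + 1) = if Reaches Step (D s) (tgt s) then tgt s else D s :=
    fun _ => rfl
  have hreachD : ∀ s, Reaches Step (D s) (D (s + 1)) := by
    intro s; rw [hDsucc s]; split_ifs with h
    · exact h
    · exact Relation.ReflTransGen.refl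
  choose L F hF0 hFk hFfin using fun s => reaches_path (hreachD s)
  set T : ℕ → ℕ := fun s => Nat.rec n (fun s Ts => Ts + L s + 1) s with hT_def
  have hT0 : T 0 = n := rfl
  have hTsucc : ∀ s, T (s + 1) = T s + L s + 1 := fun _ => rfl
  have hTge : ∀ s, n + s ≤ T s := by
    intro s; induction s with
    | zero => simp [hT0]
    | succ s ih => rw [hTsucc]; omega
  have hTmono : ∀ s s', s ≤ s' → T s ≤ T s' := by
    intro s s' h
    induction h with
    | refl => exact le_rfl
    | step h ih => rw [hTsucc]; omega
  set stage : ℕ → ℕ := fun i => Nat.findGreatest (fun s => T s ≤ i) i with hstage_def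
  have hstage_le : ∀ i, n ≤ i → T (stage i) ≤ i := by
    intro i hi
    exact Nat.findGreatest_spec (P := fun s => T s ≤ i) (m := 0) (Nat.zero_le i) (show T 0 ≤ i by rw [hT0]; exact hi)
  have hstage_lt : ∀ i, n ≤ i → i < T (stage i + 1) := by
    intro i hi
    by_contra hc
    push_neg at hc
    have h1 : stage i + 1 ≤ i := le_trans (by have := hTge (stage i + 1); omega) hc
    exact Nat.findGreatest_is_greatest (Nat.lt_succ_self _) h1 hc
  have hstage_eq : ∀ s i, T s ≤ i → i < T (s + 1) → stage i = s := by
    intro s i h1 h2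
    have hni : n ≤ i := le_trans (by have := hTge s; omega) h1
    rcases lt_trichotomy (stage i) s with h | h | h
    · have ha := hTmono (stage i + 1) s (by omega)
      have hb := hstage_lt i hni; omega
    · exact h
    · have ha := hTmono (s + 1) (stage i) (by omega)
      have hb := hstage_le i hni; omega
  set E' : ℕ → Config Q M := fun i =>
    if i < n then E i else F (stage i) (min (i - T (stage i)) (L (stage i))) with hE'_def
  have hE'at : ∀ s j, j ≤ L s → E' (T s + j) = F s j := by
    intro s j hj
    have h1 : T s ≤ T s + j := Nat.le_add_right _ _
    have h2 : T s + j < T (s + 1) := by rw [hTsucc]; omega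
    have hs : stage (T s + j) = s := hstage_eq s _ h1 h2
    have hn : n ≤ T s + j := le_trans (by have := hTge s; omega) h1
    rw [hE'_def]
    simp only [hs]
    rw [if_neg (by omega)]
    have hmin : min (T s + j - T s) (L s) = j := by omega
    rw [hmin]
  have hE'lo : ∀ i ≤ n, E' i = E i := by
    intro i hi
    rcases lt_or_eq_of_le hi with h | rfl
    · rw [hE'_def]; simp [h]
    · have h0 : E' (T 0 + 0) = F 0 0 := hE'at 0 0 (Nat.zero_le _)
      rw [hT0] at h0
      simpa [hF0 0, hD0] using h0
  have hexec : IsExecution Step E' := by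
    intro i
    rcases lt_or_ge i n with hi | hi
    · have h1 : E' i = E i := hE'lo i (le_of_lt hi)
      have h2 : E' (i + 1) = E (i + 1) := hE'lo (i + 1) hi
      rw [h1, h2]; exact hE i hi
    · have hTi : T (stage i) ≤ i := hstage_le i hi
      have hTi' : i < T (stage i + 1) := hstage_lt i hi
      set s := stage i with hsdef
      set j := i - T s with hjdef
      have hij : i = T s + j := by omega
      have hjL : j ≤ L s := by rw [hTsucc] at hTi'; omega
      rcases lt_or_eq_of_le hjL with hjlt | hjeq
      · have e1 : E' i = F s j := by rw [hij]; exact hE'at s j hjL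
        have e2 : E' (i + 1) = F s (j + 1) := by
          rw [show i + 1 = T s + (j + 1) by omega]; exact hE'at s (j + 1) hjlt
        rw [e1, e2]
        exact hFfin s j hjlt
      · left
        have e1 : E' i = F s (L s) := by rw [hij, hjeq]; exact hE'at s (L s) le_rfl
        have e2 : E' (i + 1) = F (s + 1) 0 := by
          rw [show i + 1 = T (s + 1) + 0 by rw [hTsucc]; omega]
          exact hE'at (s + 1) 0 (Nat.zero_le _)
        rw [e1, e2, hF0 (s + 1), hFk s]
  refine ⟨E', hE'lo, hexec, ?_⟩
  intro C
  by_cases hc : ∃ n₀, ∀ m, n₀ ≤ m → ¬ Reaches Step (E' m) C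
  · exact Or.inl hc
  · right
    push_neg at hc
    have hall : ∀ t, Reaches Step (E' t) C := by
      intro t
      obtain ⟨m, hm, hr⟩ := hc t
      exact (exec_reaches hexec hm).trans hr
    intro N
    obtain ⟨k, hk⟩ := he C
    set s := Nat.pair k N with hsdef
    have htgts : tgt s = C := by rw [htgt_def]; simp [hsdef, Nat.unpair_pair, hk]
    have hE'Ts : E' (T s) = D s := by
      have h0 : E' (T s + 0) = F s 0 := hE'at s 0 (Nat.zero_le _)
      simpa [hF0 s] using h0
    have hDs : Reaches Step (D s) C := by
      have := hall (T s)
      rwa [hE'Ts] at this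
    have hD1 : D (s + 1) = C := by
      rw [hDsucc s, htgts, if_pos hDs]
    refine ⟨T s + L s, ?_, ?_⟩
    · have h1 := hTge s
      have h2 := Nat.right_le_pair k N
      omega
    · rw [hE'at s (L s) le_rfl, hFk s, hD1]

end FairEventualAux

/-- The default fairness condition is eventual: every finite execution of a protocol
can be continued to an infinite execution satisfying the default fairness condition.
(Agent and packet identities range over the fixed countable set `ℕ`.) -/
theorem default_fair_is_eventual {Q M Sg : Type} [Fintype Q] [Nonempty Q] [Fintype M]
    [Fintype Sg] [Nonempty Sg] (P : Protocol Q M Sg) (hP : IsProtocolStep P.Step) :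
    Eventual P.Step (DefaultFair P.Step) := by
  intro n E hE
  exact extend_fair P.Step n E hE
end

section
/- For every finite nonempty input alphabet Σ and every counting predicate φ : ℕ^Σ → {true, false}, there exists an immediate observation population protocol (given by states Q, input mapping I, output function o, and interaction relation δ) such that, when equipped with any fairness condition that is eventual and ensures activity with respect to its step relation, the protocol implements φ. -/
open scoped Classical

/-- The step relation of the immediate observation population protocol with
interaction relation `δ` (every interaction `((q1,q2),(q3,q4)) ∈ δ` has `q3 = q1`):
the observed agent `a1` is the only active agent and keeps its state, while the
observing agent `a2` switches to `q4`. -/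
def ioStep {Q : Type} (δ : Q × Q → Q × Q → Prop) : StepRel Q Empty := fun C A C' =>
  ∃ a1 a2 q1 q2 q4, a1 ≠ a2 ∧ C.agentState a1 = some q1 ∧ C.agentState a2 = some q2 ∧
    δ (q1, q2) (q1, q4) ∧ A = {a1} ∧ C' = C.setAgent a2 (some q4)


section IOAux
variable {Sg : Type}

abbrev IOSt (Sg : Type) (N : ℕ) : Type := Sg × Fin (N+1) × (Sg → Fin (N+1))

noncomputable def ioNxt (N : ℕ) (q1 q2 : IOSt Sg N) : IOSt Sg N :=
  if h : q1.1 = q2.1 ∧ q1.2.1 = q2.2.1 ∧ (q2.2.1 : ℕ) < N then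
    ⟨q2.1, ⟨(q2.2.1 : ℕ) + 1, Nat.succ_lt_succ h.2.2⟩,
      fun ρ => max (max (q2.2.2 ρ) (q1.2.2 ρ))
        (max (if q1.1 = ρ then q1.2.1 else 0)
             (if q2.1 = ρ then ⟨(q2.2.1 : ℕ) + 1, Nat.succ_lt_succ h.2.2⟩ else 0))⟩
  else
    ⟨q2.1, q2.2.1, fun ρ => max (max (q2.2.2 ρ) (q1.2.2 ρ))
        (max (if q1.1 = ρ then q1.2.1 else 0) (if q2.1 = ρ then q2.2.1 else 0))⟩

lemma ioNxt_fst (N : ℕ) (q1 q2 : IOSt Sg N) : (ioNxt N q1 q2).1 = q2.1 := by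
  unfold ioNxt; split <;> rfl

lemma ioNxt_snd (N : ℕ) (q1 q2 : IOSt Sg N) : (ioNxt N q1 q2).2.2 = fun ρ =>
    max (max (q2.2.2 ρ) (q1.2.2 ρ))
      (max (if q1.1 = ρ then q1.2.1 else 0)
           (if q2.1 = ρ then (ioNxt N q1 q2).2.1 else 0)) := by
  unfold ioNxt; split <;> rfl

lemma ioNxt_lvl_ge (N : ℕ) (q1 q2 : IOSt Sg N) :
    (q2.2.1 : ℕ) ≤ ((ioNxt N q1 q2).2.1 : ℕ) := by
  unfold ioNxt; split <;> simp

lemma ioNxt_lvl_cases (N : ℕ) (q1 q2 : IOSt Sg N) :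
    (ioNxt N q1 q2).2.1 = q2.2.1 ∨
    (q1.1 = q2.1 ∧ q1.2.1 = q2.2.1 ∧ (q2.2.1 : ℕ) < N ∧
      ((ioNxt N q1 q2).2.1 : ℕ) = (q2.2.1 : ℕ) + 1) := by
  unfold ioNxt; split
  · next h => exact Or.inr ⟨h.1, h.2.1, h.2.2, rfl⟩
  · exact Or.inl rfl

lemma ioNxt_lvlup (N : ℕ) (q1 q2 : IOSt Sg N) (h1 : q1.1 = q2.1)
    (h2 : q1.2.1 = q2.2.1) (h3 : (q2.2.1 : ℕ) < N) :
    ((ioNxt N q1 q2).2.1 : ℕ) = (q2.2.1 : ℕ) + 1 := by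
  unfold ioNxt; rw [dif_pos ⟨h1, h2, h3⟩]

lemma ioNxt_v_ge2 (N : ℕ) (q1 q2 : IOSt Sg N) (ρ : Sg) :
    q2.2.2 ρ ≤ (ioNxt N q1 q2).2.2 ρ := by
  rw [ioNxt_snd]; exact le_max_of_le_left (le_max_left _ _)

lemma ioNxt_v_ge1 (N : ℕ) (q1 q2 : IOSt Sg N) (ρ : Sg) :
    q1.2.2 ρ ≤ (ioNxt N q1 q2).2.2 ρ := by
  rw [ioNxt_snd]; exact le_max_of_le_left (le_max_right _ _)

lemma ioNxt_v_gem (N : ℕ) (q1 q2 : IOSt Sg N) :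
    q1.2.1 ≤ (ioNxt N q1 q2).2.2 q1.1 := by
  rw [ioNxt_snd]; exact le_max_of_le_right (le_max_of_le_left (by simp))

lemma ioNxt_v_gel (N : ℕ) (q1 q2 : IOSt Sg N) :
    (ioNxt N q1 q2).2.1 ≤ (ioNxt N q1 q2).2.2 q2.1 := by
  conv_rhs => rw [ioNxt_snd]
  exact le_max_of_le_right (le_max_of_le_right (by simp))

lemma ioNxt_v_cases (N : ℕ) (q1 q2 : IOSt Sg N) (ρ : Sg) :
    (ioNxt N q1 q2).2.2 ρ = q2.2.2 ρ ∨ (ioNxt N q1 q2).2.2 ρ = q1.2.2 ρ ∨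
    (q1.1 = ρ ∧ (ioNxt N q1 q2).2.2 ρ = q1.2.1) ∨
    (q2.1 = ρ ∧ (ioNxt N q1 q2).2.2 ρ = (ioNxt N q1 q2).2.1) ∨
    (ioNxt N q1 q2).2.2 ρ = 0 := by
  have h : (ioNxt N q1 q2).2.2 ρ =
      max (max (q2.2.2 ρ) (q1.2.2 ρ))
        (max (if q1.1 = ρ then q1.2.1 else 0)
             (if q2.1 = ρ then (ioNxt N q1 q2).2.1 else 0)) := by rw [ioNxt_snd]
  rcases max_choice (max (q2.2.2 ρ) (q1.2.2 ρ))
      (max (if q1.1 = ρ then q1.2.1 else 0) (if q2.1 = ρ then (ioNxt N q1 q2).2.1 else 0)) with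
    h1 | h1 <;> rw [h1] at h
  · rcases max_choice (q2.2.2 ρ) (q1.2.2 ρ) with h2 | h2 <;> rw [h2] at h
    · exact Or.inl h
    · exact Or.inr (Or.inl h)
  · rcases max_choice (if q1.1 = ρ then q1.2.1 else 0)
        (if q2.1 = ρ then (ioNxt N q1 q2).2.1 else 0) with h2 | h2 <;> rw [h2] at h
    · split at h
      · next hc => exact Or.inr (Or.inr (Or.inl ⟨hc, h⟩))
      · exact Or.inr (Or.inr (Or.inr (Or.inr h)))
    · split at h
      · next hc => exact Or.inr (Or.inr (Or.inr (Or.inl ⟨hc, h⟩)))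
      · exact Or.inr (Or.inr (Or.inr (Or.inr h)))

end IOAux

section IOAux2
variable {Sg : Type}

/-- The interaction relation. -/
def ioδ (N : ℕ) : (IOSt Sg N × IOSt Sg N) → (IOSt Sg N × IOSt Sg N) → Prop :=
  fun p r => r.1 = p.1 ∧ r.2 = ioNxt N p.1 p.2 ∧ r.2 ≠ p.2

lemma setAgent_state {Q M : Type} (C : Config Q M) (a : ℕ) (s : Option Q) (b : ℕ) :
    (C.setAgent a s).agentState b = if b = a then s else C.agentState b :=
  Function.update_apply _ _ _ _

lemma ioStep_iff (N : ℕ) (C : Config (IOSt Sg N) Empty) (A : Set ℕ)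
    (C' : Config (IOSt Sg N) Empty) :
    ioStep (ioδ N) C A C' ↔ ∃ a1 a2 q1 q2,
      a1 ≠ a2 ∧ C.agentState a1 = some q1 ∧ C.agentState a2 = some q2 ∧
      ioNxt N q1 q2 ≠ q2 ∧ A = {a1} ∧ C' = C.setAgent a2 (some (ioNxt N q1 q2)) := by
  constructor
  · rintro ⟨a1, a2, q1, q2, q4, hne, h1, h2, ⟨-, h4, h5⟩, hA, hC'⟩
    exact ⟨a1, a2, q1, q2, hne, h1, h2, h4 ▸ h5, hA, h4 ▸ hC'⟩
  · rintro ⟨a1, a2, q1, q2, hne, h1, h2, h4, hA, hC'⟩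
    exact ⟨a1, a2, q1, q2, ioNxt N q1 q2, hne, h1, h2, ⟨rfl, rfl, h4⟩, hA, hC'⟩

lemma stepTo_iff (N : ℕ) (C C' : Config (IOSt Sg N) Empty) :
    stepTo (ioStep (ioδ N)) C C' ↔ ∃ a1 a2 q1 q2,
      a1 ≠ a2 ∧ C.agentState a1 = some q1 ∧ C.agentState a2 = some q2 ∧
      ioNxt N q1 q2 ≠ q2 ∧ C' = C.setAgent a2 (some (ioNxt N q1 q2)) := by
  constructor
  · rintro ⟨A, h⟩
    rw [ioStep_iff] at h
    obtain ⟨a1, a2, q1, q2, hne, h1, h2, h4, -, hC'⟩ := h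
    exact ⟨a1, a2, q1, q2, hne, h1, h2, h4, hC'⟩
  · rintro ⟨a1, a2, q1, q2, hne, h1, h2, h4, hC'⟩
    exact ⟨{a1}, (ioStep_iff N C _ C').2 ⟨a1, a2, q1, q2, hne, h1, h2, h4, rfl, hC'⟩⟩

/-- Agents of `C` with letter `σ` and level at least `j`. -/
noncomputable def lvF (N : ℕ) (C : Config (IOSt Sg N) Empty) (σ : Sg) (j : ℕ) : Finset ℕ :=
  C.finAgents.toFinset.filter
    (fun a => ∃ q : IOSt Sg N, C.agentState a = some q ∧ q.1 = σ ∧ j ≤ (q.2.1 : ℕ))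

lemma mem_lvF {N : ℕ} {C : Config (IOSt Sg N) Empty} {σ : Sg} {j a : ℕ} :
    a ∈ lvF N C σ j ↔ ∃ q, C.agentState a = some q ∧ q.1 = σ ∧ j ≤ (q.2.1 : ℕ) := by
  simp only [lvF, Finset.mem_filter, Set.Finite.mem_toFinset, Set.mem_setOf_eq,
    Config.agentsDom]
  constructor
  · rintro ⟨-, h⟩; exact h
  · rintro ⟨q, hq, h⟩; exact ⟨by simp [hq], q, hq, h⟩

/-- Invariants maintained along executions from the input configuration for `x`. -/
structure Good (N : ℕ) (x : Sg → ℕ) [Fintype Sg] (C : Config (IOSt Sg N) Empty) : Prop where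
  count : ∀ σ, (lvF N C σ 1).card = x σ
  lvl_pos : ∀ a (q : IOSt Sg N), C.agentState a = some q → 1 ≤ (q.2.1 : ℕ)
  tower : ∀ σ (j : ℕ), 1 ≤ j → (lvF N C σ j).Nonempty → (lvF N C σ j).card + j ≤ x σ + 1
  sound : ∀ a (q : IOSt Sg N) (ρ : Sg), C.agentState a = some q →
    (q.2.2 ρ : ℕ) = 0 ∨ ∃ b, ∃ r : IOSt Sg N, C.agentState b = some r ∧ r.1 = ρ ∧
      (q.2.2 ρ : ℕ) ≤ (r.2.1 : ℕ)
  self : ∀ a (q : IOSt Sg N), C.agentState a = some q → (q.2.1 : ℕ) ≤ (q.2.2 q.1 : ℕ)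

end IOAux2

section IOAux3
variable {Sg : Type} [Fintype Sg]

lemma good_step {N : ℕ} {x : Sg → ℕ} {C C' : Config (IOSt Sg N) Empty}
    (hg : Good N x C) (h : stepTo (ioStep (ioδ N)) C C') : Good N x C' := by
  obtain ⟨a1, a2, q1, q2, hne, h1, h2, h4, hC'⟩ := (stepTo_iff N C C').1 h
  have hst : ∀ b, C'.agentState b = if b = a2 then some (ioNxt N q1 q2) else C.agentState b := by
    intro b; rw [hC']; exact setAgent_state _ _ _ _
  have hl2 : 1 ≤ (q2.2.1 : ℕ) := hg.lvl_pos a2 q2 h2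
  have hlge : (q2.2.1 : ℕ) ≤ ((ioNxt N q1 q2).2.1 : ℕ) := ioNxt_lvl_ge N q1 q2
  have ha2mem : ∀ σ j, a2 ∈ lvF N C σ j ↔ (q2.1 = σ ∧ j ≤ (q2.2.1 : ℕ)) := by
    intro σ j
    rw [mem_lvF]
    constructor
    · rintro ⟨q, hq, hq1, hq2⟩
      rw [h2] at hq; cases Option.some.inj hq
      exact ⟨hq1, hq2⟩
    · rintro ⟨hσ, hj⟩; exact ⟨q2, h2, hσ, hj⟩
  have ha1mem : ∀ σ j, a1 ∈ lvF N C σ j ↔ (q1.1 = σ ∧ j ≤ (q1.2.1 : ℕ)) := by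
    intro σ j
    rw [mem_lvF]
    constructor
    · rintro ⟨q, hq, hq1, hq2⟩
      rw [h1] at hq; cases Option.some.inj hq
      exact ⟨hq1, hq2⟩
    · rintro ⟨hσ, hj⟩; exact ⟨q1, h1, hσ, hj⟩
  have hmem : ∀ (σ : Sg) (j b : ℕ), b ∈ lvF N C' σ j ↔
      ((b ≠ a2 ∧ b ∈ lvF N C σ j) ∨
        (b = a2 ∧ q2.1 = σ ∧ j ≤ ((ioNxt N q1 q2).2.1 : ℕ))) := by
    intro σ j b
    rcases eq_or_ne b a2 with rfl | hb
    · rw [mem_lvF]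
      constructor
      · rintro ⟨q, hq, hq1, hq2⟩
        rw [hst b, if_pos rfl] at hq
        cases Option.some.inj hq
        exact Or.inr ⟨rfl, (ioNxt_fst N q1 q2) ▸ hq1, hq2⟩
      · rintro (⟨hc, -⟩ | ⟨-, hσ, hj⟩)
        · exact absurd rfl hc
        · exact ⟨ioNxt N q1 q2, by rw [hst b, if_pos rfl], (ioNxt_fst N q1 q2).trans hσ, hj⟩
    · rw [mem_lvF]
      constructor
      · rintro ⟨q, hq, hq1, hq2⟩
        rw [hst b, if_neg hb] at hq
        exact Or.inl ⟨hb, mem_lvF.2 ⟨q, hq, hq1, hq2⟩⟩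
      · rintro (⟨-, hmem'⟩ | ⟨hc, -⟩)
        · obtain ⟨q, hq, hq1, hq2⟩ := mem_lvF.1 hmem'
          exact ⟨q, by rw [hst b, if_neg hb]; exact hq, hq1, hq2⟩
        · exact absurd hc hb
  have lvF_eq : ∀ (σ : Sg) (j : ℕ), (j ≤ (q2.2.1 : ℕ) ∨ ((ioNxt N q1 q2).2.1 : ℕ) < j) →
      lvF N C' σ j = lvF N C σ j := by
    intro σ j hcond
    ext b
    rw [hmem]
    constructor
    · rintro (⟨-, hb⟩ | ⟨rfl, hσ, hj⟩)
      · exact hb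
      · rcases hcond with hc | hc
        · exact (ha2mem σ j).2 ⟨hσ, hc⟩
        · omega
    · intro hb
      rcases eq_or_ne b a2 with rfl | hbne
      · obtain ⟨hσ, hj⟩ := (ha2mem σ j).1 hb
        exact Or.inr ⟨rfl, hσ, le_trans hj hlge⟩
      · exact Or.inl ⟨hbne, hb⟩
  constructor
  · -- count
    intro σ
    rw [lvF_eq σ 1 (Or.inl hl2)]
    exact hg.count σ
  · -- lvl_pos
    intro b q hq
    rw [hst b] at hq
    by_cases hb : b = a2
    · rw [if_pos hb] at hq
      cases Option.some.inj hq
      omega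
    · rw [if_neg hb] at hq
      exact hg.lvl_pos b q hq
  · -- tower
    intro σ j hj hne'
    rcases ioNxt_lvl_cases N q1 q2 with hsame | ⟨hτ, hm, hlt, hup⟩
    · have : lvF N C' σ j = lvF N C σ j := by
        apply lvF_eq
        rw [hsame]
        omega
      rw [this] at hne' ⊢
      exact hg.tower σ j hj hne'
    · -- level up case
      by_cases hjc : j = (q2.2.1 : ℕ) + 1
      · subst hjc
        by_cases hσ : q2.1 = σ
        · subst hσ
          have hsub : lvF N C' q2.1 ((q2.2.1 : ℕ) + 1) ⊆
              insert a2 (lvF N C q2.1 ((q2.2.1 : ℕ) + 1)) := by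
            intro b hb
            rcases (hmem _ _ b).1 hb with ⟨-, hb'⟩ | ⟨rfl, -, -⟩
            · exact Finset.mem_insert_of_mem hb'
            · exact Finset.mem_insert_self _ _
          have ha2not : a2 ∉ lvF N C q2.1 ((q2.2.1 : ℕ) + 1) := by
            rw [ha2mem]; omega
          have ha1not : a1 ∉ insert a2 (lvF N C q2.1 ((q2.2.1 : ℕ) + 1)) := by
            rw [Finset.mem_insert, ha1mem]
            push_neg
            refine ⟨hne, fun _ => ?_⟩
            have hmv : (q1.2.1 : ℕ) = (q2.2.1 : ℕ) := congrArg Fin.val hm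
            omega
          have hins : insert a1 (insert a2 (lvF N C q2.1 ((q2.2.1 : ℕ) + 1))) ⊆
              lvF N C q2.1 (q2.2.1 : ℕ) := by
            intro b hb
            rcases Finset.mem_insert.1 hb with rfl | hb
            · rw [ha1mem]
              exact ⟨hτ, le_of_eq (congrArg Fin.val hm).symm⟩
            · rcases Finset.mem_insert.1 hb with rfl | hb
              · rw [ha2mem]; exact ⟨rfl, le_refl _⟩
              · obtain ⟨q, hq, hq1, hq2⟩ := mem_lvF.1 hb
                exact mem_lvF.2 ⟨q, hq, hq1, by omega⟩
          have hc1 : (lvF N C' q2.1 ((q2.2.1 : ℕ) + 1)).card ≤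
              (lvF N C q2.1 ((q2.2.1 : ℕ) + 1)).card + 1 := by
            calc (lvF N C' q2.1 ((q2.2.1 : ℕ) + 1)).card
                ≤ (insert a2 (lvF N C q2.1 ((q2.2.1 : ℕ) + 1))).card :=
                  Finset.card_le_card hsub
              _ ≤ (lvF N C q2.1 ((q2.2.1 : ℕ) + 1)).card + 1 := Finset.card_insert_le _ _
          have hc2 : (lvF N C q2.1 ((q2.2.1 : ℕ) + 1)).card + 2 ≤
              (lvF N C q2.1 (q2.2.1 : ℕ)).card := by
            have := Finset.card_le_card hins
            rw [Finset.card_insert_of_notMem ha1not,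
              Finset.card_insert_of_notMem ha2not] at this
            omega
          have hold : (lvF N C q2.1 (q2.2.1 : ℕ)).card + (q2.2.1 : ℕ) ≤ x q2.1 + 1 :=
            hg.tower q2.1 _ hl2 ⟨a2, (ha2mem _ _).2 ⟨rfl, le_refl _⟩⟩
          omega
        · -- letter differs: sets equal
          have : lvF N C' σ ((q2.2.1 : ℕ) + 1) = lvF N C σ ((q2.2.1 : ℕ) + 1) := by
            ext b
            rw [hmem]
            constructor
            · rintro (⟨-, hb⟩ | ⟨-, hσ', -⟩)
              · exact hb
              · exact absurd hσ' hσ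
            · intro hb
              rcases eq_or_ne b a2 with rfl | hbne
              · exact absurd ((ha2mem _ _).1 hb).1 hσ
              · exact Or.inl ⟨hbne, hb⟩
          rw [this] at hne' ⊢
          exact hg.tower σ _ hj hne'
      · have : lvF N C' σ j = lvF N C σ j := by
          apply lvF_eq
          omega
        rw [this] at hne' ⊢
        exact hg.tower σ j hj hne'
  · -- sound
    intro b q ρ hq
    have hwit : ∀ c (r : IOSt Sg N), C.agentState c = some r → ∃ c', ∃ r' : IOSt Sg N,
        C'.agentState c' = some r' ∧ r'.1 = r.1 ∧ (r.2.1 : ℕ) ≤ (r'.2.1 : ℕ) := by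
      intro c r hr
      rcases eq_or_ne c a2 with hca | hc
      · have hr2 : r = q2 := by rw [hca, h2] at hr; exact (Option.some.inj hr).symm
        refine ⟨c, ioNxt N q1 q2, by rw [hst c, if_pos hca], ?_, ?_⟩
        · rw [ioNxt_fst N q1 q2, hr2]
        · rw [hr2]; exact hlge
      · exact ⟨c, r, by rw [hst c, if_neg hc]; exact hr, rfl, le_refl _⟩
    have hlift : ∀ (w : ℕ), ((w = 0) ∨ ∃ c, ∃ r : IOSt Sg N, C.agentState c = some r ∧
        r.1 = ρ ∧ w ≤ (r.2.1 : ℕ)) →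
        (w = 0 ∨ ∃ c, ∃ r : IOSt Sg N, C'.agentState c = some r ∧ r.1 = ρ ∧
          w ≤ (r.2.1 : ℕ)) := by
      rintro w (h0 | ⟨c, r, hr, hρ, hw⟩)
      · exact Or.inl h0
      · obtain ⟨c', r', hr', hρ', hle⟩ := hwit c r hr
        exact Or.inr ⟨c', r', hr', hρ'.trans hρ, hw.trans hle⟩
    rw [hst b] at hq
    by_cases hb : b = a2
    · rw [if_pos hb] at hq
      cases Option.some.inj hq
      rcases ioNxt_v_cases N q1 q2 ρ with hv | hv | ⟨hρ, hv⟩ | ⟨hρ, hv⟩ | hv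
      · rw [congrArg Fin.val hv]
        exact hlift _ (hg.sound a2 q2 ρ h2)
      · rw [congrArg Fin.val hv]
        exact hlift _ (hg.sound a1 q1 ρ h1)
      · refine Or.inr ⟨a1, q1, ?_, hρ, le_of_eq (congrArg Fin.val hv)⟩
        rw [hst a1, if_neg hne]
        exact h1
      · refine Or.inr ⟨a2, ioNxt N q1 q2, by rw [hst a2, if_pos rfl],
          (ioNxt_fst N q1 q2).trans hρ, le_of_eq (congrArg Fin.val hv)⟩
      · rw [congrArg Fin.val hv]
        exact Or.inl rfl
    · rw [if_neg hb] at hq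
      exact hlift _ (hg.sound b q ρ hq)
  · -- self
    intro b q hq
    rw [hst b] at hq
    by_cases hb : b = a2
    · rw [if_pos hb] at hq
      cases Option.some.inj hq
      have := ioNxt_v_gel N q1 q2
      rw [ioNxt_fst N q1 q2]
      exact this
    · rw [if_neg hb] at hq
      exact hg.self b q hq

end IOAux3

section IOAux4
variable {Sg : Type} [Fintype Sg]

noncomputable def ioIin (N : ℕ) (σ : Sg) : IOSt Sg N :=
  (σ, ⟨min 1 N, Nat.lt_succ_of_le (min_le_right 1 N)⟩,
    fun ρ => if σ = ρ then ⟨min 1 N, Nat.lt_succ_of_le (min_le_right 1 N)⟩ else 0)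

lemma input_states {N : ℕ} {x : Sg → ℕ} {C0 : Config (IOSt Sg N) Empty}
    (h : IsInputConfig (ioIin N) x C0) :
    ∀ a (q : IOSt Sg N), C0.agentState a = some q → q = ioIin N q.1 := by
  intro a q hq
  have hfin : ({b | C0.agentState b = some q}).Finite :=
    C0.finAgents.subset (fun b hb => by
      rw [Set.mem_setOf_eq] at *; simp [hb])
  by_cases hex : ∃ σ, ioIin N σ = q
  · obtain ⟨σ, hσ⟩ := hex
    have hq1 : q.1 = σ := by rw [← hσ]; rfl
    rw [hq1]; exact hσ.symm
  · exfalso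
    have h0 : C0.numInState q = 0 := by
      rw [h.2 q]
      apply Finset.sum_eq_zero
      intro σ _
      rw [if_neg (fun hc => hex ⟨σ, hc⟩)]
    have hemp : {b | C0.agentState b = some q} = ∅ := (Set.ncard_eq_zero hfin).1 h0
    have : a ∈ ({b | C0.agentState b = some q} : Set ℕ) := hq
    rw [hemp] at this
    exact this

lemma good_init {N : ℕ} {x : Sg → ℕ} (hN : 1 ≤ N) {C0 : Config (IOSt Sg N) Empty}
    (h : IsInputConfig (ioIin N) x C0) : Good N x C0 := by
  have hmin : min 1 N = 1 := Nat.min_eq_left hN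
  have hst := input_states h
  have hcount : ∀ σ : Sg, (lvF N C0 σ 1).card = x σ := by
    intro σ
    have hfin : ({b | C0.agentState b = some (ioIin N σ)}).Finite :=
      C0.finAgents.subset (fun b hb => by rw [Set.mem_setOf_eq] at *; simp [hb])
    have hnum : C0.numInState (ioIin N σ) = x σ := by
      rw [h.2]
      rw [Finset.sum_eq_single σ]
      · rw [if_pos rfl]
      · intro b _ hb
        rw [if_neg]
        intro hc
        exact hb (congrArg Prod.fst hc)
      · intro hc
        exact absurd (Finset.mem_univ σ) hc
    have htf : hfin.toFinset = lvF N C0 σ 1 := by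
      ext b
      rw [Set.Finite.mem_toFinset, Set.mem_setOf_eq, mem_lvF]
      constructor
      · intro hb
        refine ⟨ioIin N σ, hb, rfl, ?_⟩
        show 1 ≤ min 1 N
        omega
      · rintro ⟨q, hq, hq1, -⟩
        rw [hst b q hq, hq1] at hq
        exact hq
    rw [← htf, ← Set.ncard_eq_toFinset_card _ hfin]
    exact hnum
  constructor
  · exact hcount
  · intro a q hq
    rw [hst a q hq]
    show 1 ≤ min 1 N
    omega
  · intro σ j hj hne
    obtain ⟨b, hb⟩ := hne
    obtain ⟨q, hq, hq1, hq2⟩ := mem_lvF.1 hb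
    have : q = ioIin N q.1 := hst b q hq
    have hlv : (q.2.1 : ℕ) = 1 := by rw [this]; show min 1 N = 1; omega
    have hj1 : j = 1 := by omega
    subst hj1
    rw [hcount σ]
  · intro a q ρ hq
    have hq' : q = ioIin N q.1 := hst a q hq
    by_cases hρ : q.1 = ρ
    · refine Or.inr ⟨a, q, hq, hρ, ?_⟩
      conv_lhs => rw [hq']
      show (if q.1 = ρ then (⟨min 1 N, _⟩ : Fin (N+1)) else 0).val ≤ _
      rw [if_pos hρ]
      show min 1 N ≤ (q.2.1 : ℕ)
      have : (q.2.1 : ℕ) = 1 := by rw [hq']; show min 1 N = 1; omega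
      omega
    · left
      conv_lhs => rw [hq']
      show (if q.1 = ρ then (⟨min 1 N, _⟩ : Fin (N+1)) else 0).val = 0
      rw [if_neg hρ]
      rfl
  · intro a q hq
    conv_rhs => rw [hst a q hq]
    show _ ≤ (if q.1 = q.1 then (⟨min 1 N, _⟩ : Fin (N+1)) else 0).val
    rw [if_pos rfl]
    show (q.2.1 : ℕ) ≤ min 1 N
    have : (q.2.1 : ℕ) = 1 := by rw [hst a q hq]; show min 1 N = 1; omega
    omega

end IOAux4

section IOAux5
variable {Sg : Type} [Fintype Sg]

lemma stuck_value {N : ℕ} {x : Sg → ℕ} (hN : 1 ≤ N) {C : Config (IOSt Sg N) Empty}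
    (hg : Good N x C) (hstuck : ∀ C', ¬ stepTo (ioStep (ioδ N)) C C') :
    ∀ a (q : IOSt Sg N), C.agentState a = some q → ∀ ρ, (q.2.2 ρ : ℕ) = min (x ρ) N := by
  have hpair : ∀ b c (r s : IOSt Sg N), b ≠ c → C.agentState b = some r →
      C.agentState c = some s → ioNxt N r s = s := by
    intro b c r s hbc hb hc
    by_contra hns
    exact hstuck _ ((stepTo_iff N C _).2 ⟨b, c, r, s, hbc, hb, hc, hns, rfl⟩)
  have hlvbd : ∀ b (r : IOSt Sg N), C.agentState b = some r →
      (r.2.1 : ℕ) ≤ min (x r.1) N := by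
    intro b r hb
    have h1 : 1 ≤ (r.2.1 : ℕ) := hg.lvl_pos b r hb
    have hne : (lvF N C r.1 (r.2.1 : ℕ)).Nonempty :=
      ⟨b, mem_lvF.2 ⟨r, hb, rfl, le_refl _⟩⟩
    have := hg.tower r.1 (r.2.1 : ℕ) h1 hne
    have hcpos : 0 < (lvF N C r.1 (r.2.1 : ℕ)).card := Finset.Nonempty.card_pos hne
    have hlt : (r.2.1 : ℕ) < N + 1 := r.2.1.isLt
    omega
  have hdist : ∀ b c (r s : IOSt Sg N), b ≠ c → C.agentState b = some r →
      C.agentState c = some s → r.1 = s.1 → (r.2.1 : ℕ) = (s.2.1 : ℕ) →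
      ¬ ((s.2.1 : ℕ) < N) := by
    intro b c r s hbc hb hc hσ hlv hlt
    have heq := hpair b c r s hbc hb hc
    have := ioNxt_lvlup N r s hσ (Fin.ext hlv) hlt
    rw [heq] at this
    omega
  intro a q hq ρ
  have hupper : (q.2.2 ρ : ℕ) ≤ min (x ρ) N := by
    rcases hg.sound a q ρ hq with h0 | ⟨b, r, hb, hρ, hle⟩
    · omega
    · have := hlvbd b r hb
      rw [hρ] at this
      omega
  have hlower : min (x ρ) N ≤ (q.2.2 ρ : ℕ) := by
    rcases Nat.eq_zero_or_pos (x ρ) with hx0 | hxpos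
    · omega
    · set t := min (x ρ) N with ht
      have ht1 : 1 ≤ t := by omega
      have htN : t ≤ N := by omega
      have htx : t ≤ x ρ := by omega
      -- find an agent with letter ρ and level at least t
      have hexists : ∃ b, ∃ r : IOSt Sg N, C.agentState b = some r ∧ r.1 = ρ ∧
          t ≤ (r.2.1 : ℕ) := by
        by_contra hall
        push_neg at hall
        have hmaps : ∀ b ∈ lvF N C ρ 1,
            (C.agentState b).elim 0 (fun r : IOSt Sg N => (r.2.1 : ℕ)) ∈
              Finset.Icc 1 (t - 1) := by
          intro b hb
          obtain ⟨r, hr, hρr, hlv⟩ := mem_lvF.1 hb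
          rw [hr]
          simp only [Option.elim_some, Finset.mem_Icc]
          have := hall b r hr hρr
          omega
        have hinj : Set.InjOn
            (fun b => (C.agentState b).elim 0 (fun r : IOSt Sg N => (r.2.1 : ℕ)))
            ↑(lvF N C ρ 1) := by
          intro b hb c hc hfe
          obtain ⟨r, hr, hρr, -⟩ := mem_lvF.1 (Finset.mem_coe.1 hb)
          obtain ⟨s, hs, hρs, -⟩ := mem_lvF.1 (Finset.mem_coe.1 hc)
          simp only [] at hfe
          rw [hr, hs] at hfe
          simp only [Option.elim_some] at hfe
          by_contra hbc
          have hsN : (s.2.1 : ℕ) < N := by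
            have := hall c s hs hρs
            omega
          exact hdist b c r s hbc hr hs (hρr.trans hρs.symm) hfe hsN
        have hcard := Finset.card_le_card_of_injOn _ hmaps hinj
        rw [hg.count ρ, Nat.card_Icc] at hcard
        omega
      obtain ⟨b, r, hb, hρr, hlv⟩ := hexists
      rcases eq_or_ne b a with hba | hba
      · rw [hba, hq] at hb
        cases Option.some.inj hb
        have hself := hg.self a q hq
        rw [hρr] at hself
        omega
      · have heq := hpair b a r q hba hb hq
        have hv := ioNxt_v_gem N r q
        rw [heq] at hv
        rw [Fin.le_def] at hv
        rw [hρr] at hv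
        omega
  omega

end IOAux5

section IOAux6
variable {Sg : Type} [Fintype Sg]

noncomputable def potq {N : ℕ} (q : IOSt Sg N) : ℕ :=
  (q.2.1 : ℕ) + ∑ ρ : Sg, (q.2.2 ρ : ℕ)

lemma potq_le {N : ℕ} (q : IOSt Sg N) : potq q ≤ N * (Fintype.card Sg + 1) := by
  unfold potq
  have h1 : (q.2.1 : ℕ) ≤ N := by have := q.2.1.isLt; omega
  have h2 : ∑ ρ : Sg, (q.2.2 ρ : ℕ) ≤ ∑ _ρ : Sg, N :=
    Finset.sum_le_sum (fun ρ _ => by have := (q.2.2 ρ).isLt; omega)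
  rw [Finset.sum_const, Finset.card_univ, smul_eq_mul] at h2
  have h3 : N * (Fintype.card Sg + 1) = Fintype.card Sg * N + N := by ring
  omega

lemma potq_lt {N : ℕ} (q1 q2 : IOSt Sg N) (h : ioNxt N q1 q2 ≠ q2) :
    potq q2 < potq (ioNxt N q1 q2) := by
  have hl : (q2.2.1 : ℕ) ≤ ((ioNxt N q1 q2).2.1 : ℕ) := ioNxt_lvl_ge N q1 q2
  have hv : ∀ ρ, (q2.2.2 ρ : ℕ) ≤ ((ioNxt N q1 q2).2.2 ρ : ℕ) :=
    fun ρ => Fin.le_def.1 (ioNxt_v_ge2 N q1 q2 ρ)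
  rcases lt_or_eq_of_le hl with hlt | heq
  · exact Nat.add_lt_add_of_lt_of_le hlt (Finset.sum_le_sum fun ρ _ => hv ρ)
  · have hvne : ∃ ρ, (ioNxt N q1 q2).2.2 ρ ≠ q2.2.2 ρ := by
      by_contra hc
      push_neg at hc
      apply h
      have ha : (ioNxt N q1 q2).1 = q2.1 := ioNxt_fst N q1 q2
      have hb : (ioNxt N q1 q2).2.1 = q2.2.1 := Fin.ext heq.symm
      have hcc : (ioNxt N q1 q2).2.2 = q2.2.2 := funext hc
      exact Prod.ext ha (Prod.ext hb hcc)
    obtain ⟨ρ, hρ⟩ := hvne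
    have hs : ∑ ρ : Sg, (q2.2.2 ρ : ℕ) < ∑ ρ : Sg, ((ioNxt N q1 q2).2.2 ρ : ℕ) :=
      Finset.sum_lt_sum (fun ρ _ => hv ρ)
        ⟨ρ, Finset.mem_univ ρ, lt_of_le_of_ne (hv ρ) (fun hc => hρ (Fin.ext hc.symm))⟩
    unfold potq
    omega

noncomputable def muC {N : ℕ} (C : Config (IOSt Sg N) Empty) : ℕ :=
  ∑ b ∈ C.finAgents.toFinset,
    (N * (Fintype.card Sg + 1) + 1 - (C.agentState b).elim 0 potq)

lemma mu_step_lt {N : ℕ} {C C' : Config (IOSt Sg N) Empty}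
    (h : stepTo (ioStep (ioδ N)) C C') : muC C' < muC C := by
  obtain ⟨a1, a2, q1, q2, hne, h1, h2, h4, hC'⟩ := (stepTo_iff N C C').1 h
  have hst : ∀ b, C'.agentState b = if b = a2 then some (ioNxt N q1 q2) else C.agentState b :=
    fun b => by rw [hC']; exact setAgent_state _ _ _ _
  have hT : C'.finAgents.toFinset = C.finAgents.toFinset := by
    ext b
    simp only [Set.Finite.mem_toFinset, Set.mem_setOf_eq]
    rw [hst b]
    by_cases hb : b = a2
    · subst hb
      rw [if_pos rfl, h2]
      simp
    · rw [if_neg hb]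
  have ha2T : a2 ∈ C.finAgents.toFinset := by
    rw [Set.Finite.mem_toFinset, Set.mem_setOf_eq, h2]
    simp
  set B := N * (Fintype.card Sg + 1) + 1 with hB
  have hsum' : muC C' = (B - potq (ioNxt N q1 q2)) +
      ∑ b ∈ C.finAgents.toFinset.erase a2, (B - (C.agentState b).elim 0 potq) := by
    unfold muC
    rw [hT, ← Finset.add_sum_erase _ _ ha2T]
    congr 1
    · rw [hst a2, if_pos rfl]
      rfl
    · apply Finset.sum_congr rfl
      intro b hb
      rw [hst b, if_neg (Finset.ne_of_mem_erase hb)]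
  have hsum : muC C = (B - potq q2) +
      ∑ b ∈ C.finAgents.toFinset.erase a2, (B - (C.agentState b).elim 0 potq) := by
    unfold muC
    rw [← Finset.add_sum_erase _ _ ha2T]
    congr 1
    rw [h2]
    rfl
  rw [hsum, hsum']
  have hlt := potq_lt q1 q2 h4
  have hle := potq_le (ioNxt N q1 q2)
  omega

lemma exec_eventually_const {N : ℕ} {E : ℕ → Config (IOSt Sg N) Empty}
    (hE : IsExecution (ioStep (ioδ N)) E) : ∃ n, ∀ m, n ≤ m → E m = E n := by
  have hmono : ∀ i, muC (E (i+1)) ≤ muC (E i) := by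
    intro i
    rcases hE i with heq | hstep
    · rw [heq]
    · exact le_of_lt (mu_step_lt hstep)
  have hanti : ∀ i j, i ≤ j → muC (E j) ≤ muC (E i) := by
    intro i j hij
    induction j, hij using Nat.le_induction with
    | base => exact le_refl _
    | succ m hm ih => exact (hmono m).trans ih
  have hmem : sInf (Set.range fun i => muC (E i)) ∈ Set.range fun i => muC (E i) :=
    Nat.sInf_mem (Set.range_nonempty _)
  obtain ⟨n, hn⟩ := hmem
  have hn' : muC (E n) = sInf (Set.range fun i => muC (E i)) := hn
  have hstep_none : ∀ m, n ≤ m → E (m+1) = E m := by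
    intro m hm
    rcases hE m with heq | hstep
    · exact heq
    · exfalso
      have hlt : muC (E (m+1)) < muC (E m) := mu_step_lt hstep
      have hle : muC (E m) ≤ muC (E n) := hanti n m hm
      have hinf : sInf (Set.range fun i => muC (E i)) ≤ muC (E (m+1)) :=
        Nat.sInf_le ⟨m+1, rfl⟩
      omega
  refine ⟨n, ?_⟩
  intro m hm
  induction m, hm using Nat.le_induction with
  | base => rfl
  | succ m hm ih => rw [hstep_none m hm, ih]

lemma good_reaches {N : ℕ} {x : Sg → ℕ} {C D : Config (IOSt Sg N) Empty}
    (hg : Good N x C) (h : Reaches (ioStep (ioδ N)) C D) : Good N x D := by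
  induction h with
  | refl => exact hg
  | tail _ hstep ih => exact good_step ih hstep

lemma reaches_exec {N : ℕ} {E : ℕ → Config (IOSt Sg N) Empty}
    (hE : IsExecution (ioStep (ioδ N)) E) (i : ℕ) :
    Reaches (ioStep (ioδ N)) (E 0) (E i) := by
  induction i with
  | zero => exact Relation.ReflTransGen.refl
  | succ i ih =>
    rcases hE i with heq | hstep
    · rw [heq]; exact ih
    · exact ih.tail hstep

end IOAux6

/-- Every counting predicate is implemented by some immediate observation population
protocol (given by states `Q`, input mapping `Iin`, output function `o` and interaction
relation `δ` with `q1 = q3`), equipped with an arbitrary fairness condition that is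
eventual and ensures activity with respect to its step relation. -/
theorem counting_pred_implementable_by_IO {Sg : Type} [Fintype Sg] [Nonempty Sg]
    (φ : (Sg → ℕ) → Bool) (hφ : IsCountingPred φ) :
    ∃ (Q : Type) (_ : Fintype Q) (_ : Nonempty Q) (Iin : Sg → Q) (o : Q → Bool)
      (δ : Q × Q → Q × Q → Prop),
      (∀ pq rs, δ pq rs → pq.1 = rs.1) ∧
      ∀ Φ : (ℕ → Config Q Empty) → Prop,
        Eventual (ioStep δ) Φ → EnsuresActivity (ioStep δ) Φ →
        Implements (Protocol.mk Iin o (ioStep δ) Φ) φ := by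
  obtain ⟨nc, l, u, hS⟩ := hφ
  set N : ℕ := 1 + Finset.univ.sup
      (fun j : Fin nc => Finset.univ.sup
        (fun σ : Sg => max (l j σ) ((u j σ).toNat))) with hNdef
  have hN : 1 ≤ N := Nat.le_add_right 1 _
  have hbound : ∀ (j : Fin nc) (σ : Sg), max (l j σ) ((u j σ).toNat) < N := by
    intro j σ
    have hin1 : max (l j σ) ((u j σ).toNat) ≤
        Finset.univ.sup (fun σ : Sg => max (l j σ) ((u j σ).toNat)) :=
      Finset.le_sup (f := fun σ : Sg => max (l j σ) ((u j σ).toNat)) (Finset.mem_univ σ)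
    have hin2 : Finset.univ.sup (fun σ : Sg => max (l j σ) ((u j σ).toNat)) ≤
        Finset.univ.sup (fun j : Fin nc => Finset.univ.sup
          (fun σ : Sg => max (l j σ) ((u j σ).toNat))) :=
      Finset.le_sup (f := fun j : Fin nc => Finset.univ.sup
        (fun σ : Sg => max (l j σ) ((u j σ).toNat))) (Finset.mem_univ j)
    omega
  have hmemφ : ∀ y : Sg → ℕ, φ y = true ↔ y ∈ ⋃ j, cube (l j) (u j) := by
    intro y
    rw [← hS]
    rfl
  have hcube : ∀ (j : Fin nc) (x : Sg → ℕ),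
      ((fun σ => min (x σ) N) ∈ cube (l j) (u j)) ↔ x ∈ cube (l j) (u j) := by
    intro j x
    have key : ∀ σ : Sg, (l j σ ≤ min (x σ) N ∧ ((min (x σ) N : ℕ) : ℕ∞) ≤ u j σ) ↔
        (l j σ ≤ x σ ∧ ((x σ : ℕ) : ℕ∞) ≤ u j σ) := by
      intro σ
      have hlN : l j σ < N := lt_of_le_of_lt (le_max_left _ _) (hbound j σ)
      rcases eq_or_ne (u j σ) ⊤ with hT | hT
      · rw [hT]
        constructor
        · rintro ⟨ha, -⟩; exact ⟨by omega, le_top⟩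
        · rintro ⟨ha, -⟩; exact ⟨by omega, le_top⟩
      · have hk : (((u j σ).toNat : ℕ) : ℕ∞) = u j σ := ENat.coe_toNat hT
        have hkN : (u j σ).toNat < N := lt_of_le_of_lt (le_max_right _ _) (hbound j σ)
        rw [← hk, Nat.cast_le, Nat.cast_le]
        omega
    constructor
    · intro h σ
      exact (key σ).1 (h σ)
    · intro h σ
      exact (key σ).2 (h σ)
  have htrunc : ∀ x : Sg → ℕ, φ (fun σ => min (x σ) N) = φ x := by
    intro x
    rw [Bool.eq_iff_iff, hmemφ, hmemφ]
    simp only [Set.mem_iUnion]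
    constructor
    · rintro ⟨j, hj⟩; exact ⟨j, (hcube j x).1 hj⟩
    · rintro ⟨j, hj⟩; exact ⟨j, (hcube j x).2 hj⟩
  refine ⟨IOSt Sg N, inferInstance, inferInstance, ioIin N,
    (fun q => φ (fun ρ => ((q.2.2 ρ : ℕ)))), ioδ N, ?_, ?_⟩
  · rintro ⟨p1, p2⟩ ⟨r1, r2⟩ ⟨h, -⟩
    exact h.symm
  · intro Φ hEv hAct x C0 hinput E hE hfair hE0
    have hg0 : Good N x C0 := good_init hN hinput
    obtain ⟨n0, hconst⟩ := exec_eventually_const hE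
    have hgood : Good N x (E n0) := by
      apply good_reaches _ (reaches_exec hE n0)
      rw [hE0]
      exact hg0
    have hstuck : ∀ C', ¬ stepTo (ioStep (ioδ N)) (E n0) C' := by
      intro C' hC'
      have heq : C' = E n0 := hAct E hE hfair n0 hconst C' hC'
      obtain ⟨a1, a2, q1, q2, hne, h1, h2, h4, hC'eq⟩ := (stepTo_iff N _ _).1 hC'
      have : C'.agentState a2 = some (ioNxt N q1 q2) := by
        rw [hC'eq]
        rw [setAgent_state, if_pos rfl]
      rw [heq, h2] at this
      exact h4 (Option.some.inj this).symm
    have hvals := stuck_value hN hgood hstuck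
    refine ⟨n0, ?_⟩
    intro D hreachD
    have hD : D = E n0 := by
      rcases Relation.ReflTransGen.cases_head hreachD with hD | ⟨c, hc, -⟩
      · exact hD.symm
      · exact absurd hc (hstuck c)
    subst hD
    intro a q hq
    show φ (fun ρ => ((q.2.2 ρ : ℕ))) = φ x
    have : (fun ρ => ((q.2.2 ρ : ℕ))) = fun ρ => min (x ρ) N :=
      funext (fun ρ => hvals a q hq ρ)
    rw [this, htrunc]
end

section
/- For an immediate observation population protocol, unreliability adds nothing: every step C --A⊙--> C'' of the corresponding unreliable protocol satisfies either C'' = C or that C --A⊙--> C'' is a step of the original protocol. -/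
open scoped Classical

/-- For an immediate observation population protocol, unreliability adds nothing:
every step of the corresponding unreliable protocol is either a step of the original
protocol or does not change the configuration at all. -/
theorem unreliable_io_adds_nothing {Q Sg : Type} (δ : Q × Q → Q × Q → Prop)
    (hIO : ∀ pq rs, δ pq rs → pq.1 = rs.1)
    (C C'' : Config Q Empty) (A : Set ℕ)
    (h : UnrelStep (ioStep δ) C A C'') :
    C'' = C ∨ ioStep δ C A C'' := by
  have ext' : ∀ {D E : Config Q Empty}, D.agentState = E.agentState →
      D.packetMsg = E.packetMsg → D = E := by
    rintro ⟨a, p, _, _⟩ ⟨a', p', _, _⟩ h1 h2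
    simp_all
  rcases h with h | ⟨C', hstep, _hdom, hpm, hst, _⟩
  · exact Or.inr h
  obtain ⟨a1, a2, q1, q2, q4, hne, h1, h2, hδ, hA, hC'⟩ := hstep
  have hpm' : C''.packetMsg = C.packetMsg := by
    rw [hpm, hC']; rfl
  have hother : ∀ a, a ≠ a2 → C''.agentState a = C.agentState a := by
    intro a ha
    rcases hst a with h | h
    · exact h
    · rw [h, hC']; simp [Config.setAgent, Function.update, ha]
  rcases hst a2 with h | h
  · left
    apply ext' _ hpm'
    funext a
    rcases eq_or_ne a a2 with rfl | ha
    · exact h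
    · exact hother a ha
  · right
    refine ⟨a1, a2, q1, q2, q4, hne, h1, h2, hδ, hA, ?_⟩
    apply ext' _ (by rw [hpm']; rfl)
    funext a
    rcases eq_or_ne a a2 with rfl | ha
    · rw [h, hC']
    · rw [hother a ha, Config.setAgent]
      simp [Function.update, ha]
end

section
/- Every unreliable protocol is shadow-permitting: for every protocol P, if the fairness condition of P is eventual and ensures activity also with respect to the unreliable step relation, then the unreliable protocol corresponding to P is shadow-permitting, i.e. for every configuration C there is a fair execution of the unreliable protocol starting from C that has a shadow extension around every agent of C. -/
open scoped Classical

/-!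
A single fresh agent `a'` serves as the shadow of every agent. Along an execution `E`, the shadow
of `b` can reach `q` at time `t` if `a'`, added as a copy of `b`, can move along the first `t`
steps of `E` and end in `q`. Fresh agents can be carried along any unreliable step, so if every
state an agent is about to enter is already reachable by its shadow, the shadow can always wait
in it, and at every time some extension has `a'` in the state of `b`.

To get a fair execution with this property, extend a prefix fairly (eventuality). At the first
step where the property fails for some agent `b`, replace that step by a degraded one in which `b`
stays put while its shadow, exchanged with `b` by anonymity, takes the target of `b` instead. This
strictly enlarges the set of reachable pairs (agent, state), which is finite, so eventually the
fair extension has the property.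
-/

attribute [ext] Config

namespace Config

variable {Q M : Type}

@[simp] lemma agentState_setAgent (C : Config Q M) (a : ℕ) (s : Option Q) :
    (C.setAgent a s).agentState = Function.update C.agentState a s := rfl

@[simp] lemma packetMsg_setAgent (C : Config Q M) (a : ℕ) (s : Option Q) :
    (C.setAgent a s).packetMsg = C.packetMsg := rfl

lemma mem_agentsDom {C : Config Q M} {a : ℕ} : a ∈ C.agentsDom ↔ C.agentState a ≠ none :=
  Iff.rfl

lemma setAgent_none_setAgent {C : Config Q M} {a : ℕ} (h : C.agentState a = none)
    (s : Option Q) : (C.setAgent a s).setAgent a none = C := by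
  ext1
  · simp [← h]
  · rfl

lemma agentState_eq_none_iff_of_agentsDom_eq {C D : Config Q M} (h : C.agentsDom = D.agentsDom)
    (a : ℕ) : C.agentState a = none ↔ D.agentState a = none := by
  simpa [agentsDom] using (Set.ext_iff.1 h a).not

/-- The degraded version of a step `X → Y` in which only the agents of `S` move. -/
noncomputable def piecewise (S : Set ℕ) (Y X : Config Q M) : Config Q M where
  agentState := S.piecewise Y.agentState X.agentState
  packetMsg := Y.packetMsg
  finAgents := (Y.finAgents.union X.finAgents).subset fun a ha => by
    by_cases h : a ∈ S <;> simp_all [Set.piecewise]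
  finPackets := Y.finPackets

@[simp] lemma agentState_piecewise (S : Set ℕ) (Y X : Config Q M) :
    (piecewise S Y X).agentState = S.piecewise Y.agentState X.agentState := rfl

@[simp] lemma packetMsg_piecewise (S : Set ℕ) (Y X : Config Q M) :
    (piecewise S Y X).packetMsg = Y.packetMsg := rfl

end Config

section Steps

variable {Q M : Type} {Step : StepRel Q M}

lemma UnrelStep.exists_base {C C'' : Config Q M} {A : Set ℕ} (h : UnrelStep Step C A C'') :
    ∃ C', Step C A C' ∧ C''.agentsDom = C'.agentsDom ∧ C''.packetMsg = C'.packetMsg ∧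
      (∀ a, C''.agentState a = C.agentState a ∨ C''.agentState a = C'.agentState a) ∧
      ((∀ a ∉ A, C''.agentState a = C.agentState a) ∨
        (∀ a ∈ A, C''.agentState a = C'.agentState a)) := by
  rcases h with h | h
  · exact ⟨C'', h, rfl, rfl, fun _ => Or.inr rfl, Or.inr fun _ _ => rfl⟩
  · exact h

lemma UnrelStep.agentsDom_eq (hP : IsProtocolStep Step) {C C'' : Config Q M} {A : Set ℕ}
    (h : UnrelStep Step C A C'') : C.agentsDom = C''.agentsDom := by
  obtain ⟨C', hB, hdom, -⟩ := h.exists_base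
  rw [hdom, hP.agent_conservation hB]

lemma IsExecution.agentsDom_eq (hP : IsProtocolStep Step) {E : ℕ → Config Q M}
    (hE : IsExecution (UnrelStep Step) E) (k : ℕ) : (E k).agentsDom = (E 0).agentsDom := by
  induction k with
  | zero => rfl
  | succ k ih =>
    rcases hE k with h | ⟨A, h⟩
    · rw [h, ih]
    · rw [← h.agentsDom_eq hP, ih]

lemma IsExecution.agentState_eq_none (hP : IsProtocolStep Step) {E : ℕ → Config Q M}
    (hE : IsExecution (UnrelStep Step) E) {a : ℕ} (ha : (E 0).agentState a = none) (k : ℕ) :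
    (E k).agentState a = none :=
  (Config.agentState_eq_none_iff_of_agentsDom_eq (hE.agentsDom_eq hP k) a).2 ha

/-- The passive agent added by `add_passive` may move, but a degraded step keeps it in place. -/
lemma UnrelStep.setAgent_fresh (hP : IsProtocolStep Step) {C C'' : Config Q M} {A : Set ℕ}
    (h : UnrelStep Step C A C'') {a : ℕ} (ha : C.agentState a = none) (q : Q) :
    UnrelStep Step (C.setAgent a (some q)) A (C''.setAgent a (some q)) := by
  obtain ⟨C', hB, hdom, hpkt, hmix, hrel⟩ := h.exists_base
  have ha' : C'.agentState a = none :=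
    (Config.agentState_eq_none_iff_of_agentsDom_eq (hP.agent_conservation hB) a).1 ha
  have haA : a ∉ A := fun h => hP.active_subset hB h ha
  obtain ⟨q', hB'⟩ := hP.add_passive a q hB ha ha'
  refine Or.inr ⟨C'.setAgent a (some q'), hB', ?_, by simp [hpkt], fun x => ?_, ?_⟩
  · ext x
    rcases eq_or_ne x a with rfl | hx
    · simp [Config.agentsDom]
    · simpa [Config.agentsDom, hx] using Set.ext_iff.1 hdom x
  · rcases eq_or_ne x a with rfl | hx <;> simp_all
  · refine hrel.imp (fun h x hx => ?_) (fun h x hx => ?_)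
    · rcases eq_or_ne x a with rfl | hxa <;> simp_all
    · have hxa : x ≠ a := by rintro rfl; exact haA hx
      simp_all

lemma stepTo_setAgent_fresh (hP : IsProtocolStep Step) {C C'' : Config Q M}
    (h : stepTo (UnrelStep Step) C C'') {a : ℕ} (ha : C.agentState a = none) (q : Q) :
    stepTo (UnrelStep Step) (C.setAgent a (some q)) (C''.setAgent a (some q)) :=
  h.imp fun _ hA => hA.setAgent_fresh hP ha q

lemma UnrelStep.piecewise (hP : IsProtocolStep Step) {X Y : Config Q M} {A S : Set ℕ}
    (hB : Step X A Y) (hS : S ⊆ A) : UnrelStep Step X A (Y.piecewise S X) := by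
  refine Or.inr ⟨Y, hB, ?_, rfl, fun x => ?_, Or.inl fun x hx => ?_⟩
  · ext x
    by_cases hx : x ∈ S
    · simp [Config.agentsDom, hx]
    · simpa [Config.agentsDom, hx] using Set.ext_iff.1 (hP.agent_conservation hB) x
  · by_cases hx : x ∈ S <;> simp [hx]
  · simp [show x ∉ S from fun h => hx (hS h)]

/-- Letting a fresh copy `a'` of `b` take over the role of `b` in a step: `a'` moves as `b`
would have, while `b` becomes a passive agent. -/
lemma IsProtocolStep.exists_step_swap (hP : IsProtocolStep Step) {X Y : Config Q M}
    {A : Set ℕ} (hB : Step X A Y) {b a' : ℕ} {s : Q} (hb : X.agentState b = some s)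
    (ha' : X.agentState a' = none) :
    ∃ q, Step (X.setAgent a' (some s)) (Equiv.swap b a' ⁻¹' A)
      ((Y.setAgent a' (Y.agentState b)).setAgent b (some q)) := by
  have hba' : b ≠ a' := by rintro rfl; simp_all
  have hY : Y.agentState a' = none :=
    (Config.agentState_eq_none_iff_of_agentsDom_eq (hP.agent_conservation hB) a').1 ha'
  obtain ⟨q, hq⟩ := hP.add_passive a' s hB ha' hY
  refine ⟨q, ?_⟩
  convert hP.anonymity (Equiv.swap b a') 1 hq using 1 <;> ext1 <;> funext x
  · rcases eq_or_ne x b with rfl | hxb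
    · simp [Config.rename, hba', hb]
    rcases eq_or_ne x a' with rfl | hxa'
    · simp [Config.rename, hba', hb]
    · simp [Config.rename, Equiv.swap_apply_of_ne_of_ne hxb hxa', hxa']
  · simp [Config.rename]
  · rcases eq_or_ne x b with rfl | hxb
    · simp [Config.rename]
    rcases eq_or_ne x a' with rfl | hxa'
    · simp [Config.rename, hxb, hba']
    · simp [Config.rename, Equiv.swap_apply_of_ne_of_ne hxb hxa', hxa', hxb]
  · simp [Config.rename]

/-- Exchanging `b` with its shadow `a'`, the shadow takes the target `q` of `b` in the base step
`X → Y` while `b` stays put, and the original agents perform the degraded step to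
`Y.piecewise S X`. -/
lemma stepTo_setAgent_piecewise (hP : IsProtocolStep Step) {X Y : Config Q M}
    {A S : Set ℕ} (hB : Step X A Y) (hSA : S ⊆ A) {b a' : ℕ} {s q : Q}
    (hb : X.agentState b = some s) (hq : Y.agentState b = some q)
    (ha' : X.agentState a' = none) (hbS : b ∉ S) (hcase : b ∈ A ∨ A ⊆ S) :
    stepTo (UnrelStep Step) (X.setAgent a' (some s)) ((Y.piecewise S X).setAgent a' (some q)) := by
  have hba' : b ≠ a' := by rintro rfl; simp_all
  have ha'A : a' ∉ A := fun h => hP.active_subset hB h ha'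
  have hdom := Config.agentState_eq_none_iff_of_agentsDom_eq (hP.agent_conservation hB)
  obtain ⟨q₁, hZ⟩ := hP.exists_step_swap hB hb ha'
  refine ⟨_, Or.inr ⟨_, hZ, ?_, by simp, fun x => ?_, ?_⟩⟩
  · ext x
    rcases eq_or_ne x a' with rfl | hxa'
    · simp [Config.agentsDom, hba'.symm, hq]
    rcases eq_or_ne x b with rfl | hxb
    · simp [Config.agentsDom, hxa', hbS, hb]
    by_cases hxS : x ∈ S <;> simp [Config.agentsDom, hxa', hxb, hxS, hdom x]
  · rcases eq_or_ne x a' with rfl | hxa'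
    · simp [hba'.symm, hq]
    rcases eq_or_ne x b with rfl | hxb
    · simp [hxa', hbS]
    by_cases hxS : x ∈ S <;> simp [hxa', hxb, hxS]
  · rcases hcase with hbA | hAS
    · refine Or.inl fun x hx => ?_
      rcases eq_or_ne x a' with rfl | hxa'
      · simp [hbA] at hx
      rcases eq_or_ne x b with rfl | hxb
      · simp [hxa', hbS]
      have hxS : x ∉ S := fun h =>
        hx (by simpa [Equiv.swap_apply_of_ne_of_ne hxb hxa'] using hSA h)
      simp [hxa', hxS]
    · refine Or.inr fun x hx => ?_
      rcases eq_or_ne x a' with rfl | hxa'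
      · simp [hba'.symm, hq]
      rcases eq_or_ne x b with rfl | hxb
      · simp [ha'A] at hx
      have hxS : x ∈ S := hAS (by simpa [Equiv.swap_apply_of_ne_of_ne hxb hxa'] using hx)
      simp [hxa', hxb, hxS]

end Steps

section ShadowRun

variable {Q M : Type} {Step : StepRel Q M}

def ShadowCanReach (R : StepRel Q M) (E : ℕ → Config Q M) (b a' t : ℕ) (w : Q) : Prop :=
  ∃ v : ℕ → Q, (E 0).agentState b = some (v 0) ∧
    IsFinExecution R t (fun k => (E k).setAgent a' (some (v k))) ∧ v t = w

/-- A shadow that can reach the next state of its agent one step early can wait there, so it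
keeps up with the agent. -/
def ShadowsAnticipate (R : StepRel Q M) (E : ℕ → Config Q M) (a' n : ℕ) : Prop :=
  ∀ k < n, ∀ b q, (E (k + 1)).agentState b = some q → ShadowCanReach R E b a' k q

lemma IsExecution.setAgent_min (hP : IsProtocolStep Step) {E : ℕ → Config Q M}
    (hE : IsExecution (UnrelStep Step) E) {a' : ℕ} (ha' : (E 0).agentState a' = none)
    {v : ℕ → Q} {t : ℕ}
    (hv : IsFinExecution (UnrelStep Step) t (fun k => (E k).setAgent a' (some (v k)))) :
    IsExecution (UnrelStep Step) (fun k => (E k).setAgent a' (some (v (min k t)))) := by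
  intro k
  rcases lt_or_ge k t with hk | hk
  · simpa only [min_eq_left hk.le, min_eq_left (Nat.succ_le_of_lt hk)] using hv k hk
  · simp only [min_eq_right hk, min_eq_right (hk.trans k.le_succ)]
    exact (hE k).imp (congrArg (Config.setAgent · a' _))
      (stepTo_setAgent_fresh hP · (hE.agentState_eq_none hP ha' k) _)

lemma shadowCanReach_zero {R : StepRel Q M} {E : ℕ → Config Q M} {b : ℕ} (a' : ℕ) {w : Q}
    (hb : (E 0).agentState b = some w) : ShadowCanReach R E b a' 0 w :=
  ⟨fun _ => w, hb, fun _ hk => absurd hk (Nat.not_lt_zero _), rfl⟩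

namespace ShadowCanReach

variable {R : StepRel Q M} {E F : ℕ → Config Q M} {b a' t : ℕ} {w : Q}

lemma congr (hEF : ∀ i ≤ t, E i = F i) (h : ShadowCanReach R E b a' t w) :
    ShadowCanReach R F b a' t w := by
  obtain ⟨v, hv0, hv, hvt⟩ := h
  refine ⟨v, hEF 0 t.zero_le ▸ hv0, fun k hk => ?_, hvt⟩
  simpa only [hEF k hk.le, hEF (k + 1) hk] using hv k hk

lemma succ (h : ShadowCanReach R E b a' t w) {w' : Q}
    (hstep : (E (t + 1)).setAgent a' (some w') = (E t).setAgent a' (some w) ∨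
      stepTo R ((E t).setAgent a' (some w)) ((E (t + 1)).setAgent a' (some w'))) :
    ShadowCanReach R E b a' (t + 1) w' := by
  obtain ⟨v, hv0, hv, rfl⟩ := h
  refine ⟨fun k => if k ≤ t then v k else w', by simpa using hv0, fun k hk => ?_, by simp⟩
  rcases Nat.lt_succ_iff_lt_or_eq.1 hk with hk | rfl
  · simpa [hk.le, Nat.succ_le_of_lt hk] using hv k hk
  · simpa using hstep

lemma mono (hP : IsProtocolStep Step) (hE : IsExecution (UnrelStep Step) E)
    (ha' : (E 0).agentState a' = none) (h : ShadowCanReach (UnrelStep Step) E b a' t w)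
    {t' : ℕ} (htt' : t ≤ t') : ShadowCanReach (UnrelStep Step) E b a' t' w := by
  obtain ⟨v, hv0, hv, rfl⟩ := h
  exact ⟨fun k => v (min k t), by simpa using hv0, fun k _ => hE.setAgent_min hP ha' hv k,
    by simp [htt']⟩

end ShadowCanReach

namespace ShadowsAnticipate

variable {R : StepRel Q M} {E F : ℕ → Config Q M} {a' n : ℕ}

lemma mono (h : ShadowsAnticipate R E a' n) {m : ℕ} (hmn : m ≤ n) :
    ShadowsAnticipate R E a' m :=
  fun k hk => h k (hk.trans_le hmn)

lemma congr (hEF : ∀ i ≤ n, E i = F i) (h : ShadowsAnticipate R E a' n) :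
    ShadowsAnticipate R F a' n := fun k hk b q hb =>
  (h k hk b q (by rwa [hEF (k + 1) hk])).congr fun i hi => hEF i (hi.trans hk.le)

lemma shadowCanReach (hP : IsProtocolStep Step) (hE : IsExecution (UnrelStep Step) E)
    (ha' : (E 0).agentState a' = none) (h : ShadowsAnticipate (UnrelStep Step) E a' n)
    {t b : ℕ} {s : Q} (ht : t ≤ n) (hb : (E t).agentState b = some s) :
    ShadowCanReach (UnrelStep Step) E b a' t s := by
  cases t with
  | zero => exact shadowCanReach_zero a' hb
  | succ k => exact (h k ht b s hb).mono hP hE ha' k.le_succ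

end ShadowsAnticipate

lemma isShadowExtension_of_forall_shadowsAnticipate (hP : IsProtocolStep Step)
    {E : ℕ → Config Q M} (hE : IsExecution (UnrelStep Step) E) {a a' : ℕ}
    (ha : a ∈ (E 0).agentsDom) (ha' : (E 0).agentState a' = none)
    (h : ∀ n, ShadowsAnticipate (UnrelStep Step) E a' n) :
    IsShadowExtension (UnrelStep Step) E a a'
      {G | IsExecution (UnrelStep Step) G ∧ (G 0).agentState a' = (E 0).agentState a ∧
        ∀ k, (G k).setAgent a' none = E k} := by
  have haa' : a ≠ a' := by rintro rfl; exact ha ha'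
  refine ⟨ha, by simpa [Config.agentsDom] using ha', fun G hG => hG, fun k => ?_⟩
  obtain ⟨s, hs⟩ :=
    Option.ne_none_iff_exists'.1 (by rwa [← Config.mem_agentsDom, hE.agentsDom_eq hP k])
  obtain ⟨v, hv0, hv, rfl⟩ := (h k).shadowCanReach hP hE ha' le_rfl hs
  refine ⟨fun m => (E m).setAgent a' (some (v (min m k))),
    ⟨hE.setAgent_min hP ha' hv, by simp [hv0], fun m => ?_⟩, by simp [haa', hs]⟩
  exact Config.setAgent_none_setAgent (hE.agentState_eq_none hP ha' m) _

end ShadowRun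

section Construction

variable {Q M : Type} {Step : StepRel Q M}

def shadowReachable (R : StepRel Q M) (E : ℕ → Config Q M) (a' t : ℕ) : Set (ℕ × Q) :=
  {p | ShadowCanReach R E p.1 a' t p.2}

lemma shadowReachable_subset (R : StepRel Q M) (E : ℕ → Config Q M) (a' t : ℕ) :
    shadowReachable R E a' t ⊆ (E 0).agentsDom ×ˢ Set.univ :=
  fun _ ⟨_, hv0, _⟩ => ⟨by simp [Config.mem_agentsDom, hv0], trivial⟩

lemma IsExecution.ite_le {R : StepRel Q M} {E : ℕ → Config Q M} (hE : IsExecution R E)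
    {K : ℕ} {T : Config Q M} (hT : stepTo R (E K) T) :
    IsExecution R (fun i => if i ≤ K then E i else T) := by
  intro i
  rcases lt_trichotomy i K with hi | rfl | hi
  · simpa [hi.le, Nat.succ_le_of_lt hi] using hE i
  · simpa using Or.inr hT
  · simp [hi.not_ge, (hi.trans i.lt_succ_self).not_ge]

variable {E : ℕ → Config Q M} {a' K : ℕ}

lemma exists_step_not_shadowCanReach (hP : IsProtocolStep Step)
    (hE : IsExecution (UnrelStep Step) E) (ha' : (E 0).agentState a' = none)
    (hgood : ShadowsAnticipate (UnrelStep Step) E a' K)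
    (hbad : ¬ ShadowsAnticipate (UnrelStep Step) E a' (K + 1)) :
    ∃ A Y b q, Step (E K) A Y ∧ Y.agentState b = some q ∧
      ¬ ShadowCanReach (UnrelStep Step) E b a' K q ∧
      (b ∈ A ∨ ∀ x ∈ A, ∀ q', Y.agentState x = some q' →
        ShadowCanReach (UnrelStep Step) E x a' K q') := by
  have hcur := fun b s => hgood.shadowCanReach (b := b) (s := s) hP hE ha' le_rfl
  obtain ⟨b₀, q₀, hb₀, hnq₀⟩ : ∃ b q, (E (K + 1)).agentState b = some q ∧
      ¬ ShadowCanReach (UnrelStep Step) E b a' K q := by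
    simp only [ShadowsAnticipate, not_forall] at hbad
    obtain ⟨k, hk, b, q, hb, hnq⟩ := hbad
    obtain rfl : k = K := by
      by_contra hne
      exact hnq (hgood k (lt_of_le_of_ne (Nat.lt_succ_iff.1 hk) hne) b q hb)
    exact ⟨b, q, hb, hnq⟩
  have hne : E (K + 1) ≠ E K := fun h => hnq₀ (hcur b₀ q₀ (h ▸ hb₀))
  obtain ⟨A, hA⟩ := (hE K).resolve_left hne
  obtain ⟨Y, hB, -, -, hmix, -⟩ := hA.exists_base
  by_cases hall : ∀ x ∈ A, ∀ q', Y.agentState x = some q' →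
      ShadowCanReach (UnrelStep Step) E x a' K q'
  · refine ⟨A, Y, b₀, q₀, hB, ?_, hnq₀, Or.inr hall⟩
    rcases hmix b₀ with h | h
    · exact absurd (hcur b₀ q₀ (h ▸ hb₀)) hnq₀
    · exact h ▸ hb₀
  · push Not at hall
    obtain ⟨b, hbA, q, hq, hnq⟩ := hall
    exact ⟨A, Y, b, q, hB, hq, hnq, Or.inl hbA⟩

/-- Replacing the step at time `K` by the degraded step in which exactly the active agents
whose targets are anticipated move lets the shadow of `b` jump to the unreachable state `q`. -/
lemma exists_shadowReachable_ssubset (hP : IsProtocolStep Step)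
    (hE : IsExecution (UnrelStep Step) E) (ha' : (E 0).agentState a' = none)
    (hgood : ShadowsAnticipate (UnrelStep Step) E a' K)
    {A : Set ℕ} {Y : Config Q M} {b : ℕ} {q : Q} (hB : Step (E K) A Y)
    (hq : Y.agentState b = some q) (hnq : ¬ ShadowCanReach (UnrelStep Step) E b a' K q)
    (hcase : b ∈ A ∨ ∀ x ∈ A, ∀ q', Y.agentState x = some q' →
      ShadowCanReach (UnrelStep Step) E x a' K q') :
    ∃ F, IsExecution (UnrelStep Step) F ∧ (∀ i ≤ K, F i = E i) ∧
      ShadowsAnticipate (UnrelStep Step) F a' (K + 1) ∧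
      shadowReachable (UnrelStep Step) E a' K ⊂
        shadowReachable (UnrelStep Step) F a' (K + 1) := by
  have hcur := fun b s => hgood.shadowCanReach (b := b) (s := s) hP hE ha' le_rfl
  set S := {x ∈ A | ∀ q', Y.agentState x = some q' →
    ShadowCanReach (UnrelStep Step) E x a' K q'}
  have hbS : b ∉ S := fun h => hnq (h.2 q hq)
  have hdom := Config.agentState_eq_none_iff_of_agentsDom_eq (hP.agent_conservation hB)
  obtain ⟨s, hs⟩ : ∃ s, (E K).agentState b = some s :=
    Option.ne_none_iff_exists'.1 fun h => by simp [(hdom b).1 h] at hq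
  set F := fun i => if i ≤ K then E i else Y.piecewise S (E K)
  have hFE : ∀ i ≤ K, F i = E i := fun i hi => if_pos hi
  have hEF : ∀ i ≤ K, E i = F i := fun i hi => (hFE i hi).symm
  have hFK : F (K + 1) = Y.piecewise S (E K) := if_neg (by omega)
  have hF : IsExecution (UnrelStep Step) F :=
    hE.ite_le ⟨A, .piecewise hP hB (Set.sep_subset _ _)⟩
  have hF0 : (F 0).agentState a' = none := by rwa [hFE 0 K.zero_le]
  refine ⟨F, hF, hFE, fun k hk x q' hx => ?_, (Set.ssubset_iff_of_subset fun p hp => ?_).2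
    ⟨(b, q), ?_, hnq⟩⟩
  · rcases Nat.lt_succ_iff_lt_or_eq.1 hk with hk | rfl
    · exact hgood.congr hEF k hk x q' hx
    refine ShadowCanReach.congr hEF ?_
    by_cases hxS : x ∈ S
    · exact hxS.2 q' (by simpa [hFK, hxS] using hx)
    · exact hcur x q' (by simpa [hFK, hxS] using hx)
  · exact (ShadowCanReach.congr hEF hp).mono hP hF hF0 K.le_succ
  · refine ((hcur b s hs).congr hEF).succ (Or.inr ?_)
    rw [hFE K le_rfl, hFK]
    exact stepTo_setAgent_piecewise hP hB (Set.sep_subset _ _) hs hq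
      (hE.agentState_eq_none hP ha' K) hbS (hcase.imp_right fun h x hx => ⟨hx, h x hx⟩)

end Construction

section Iteration

variable {Q M : Type} {Step : StepRel Q M} {Φ : (ℕ → Config Q M) → Prop} {a' : ℕ}

lemma exists_fair_or_shadowReachable_ssubset (hP : IsProtocolStep Step)
    (hEv : Eventual (UnrelStep Step) Φ) {F : ℕ → Config Q M}
    (hF : IsExecution (UnrelStep Step) F) (ha' : (F 0).agentState a' = none) {n : ℕ}
    (hgood : ShadowsAnticipate (UnrelStep Step) F a' n) :
    (∃ E, IsExecution (UnrelStep Step) E ∧ E 0 = F 0 ∧ Φ E ∧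
      ∀ m, ShadowsAnticipate (UnrelStep Step) E a' m) ∨
    ∃ F' n', IsExecution (UnrelStep Step) F' ∧ F' 0 = F 0 ∧
      ShadowsAnticipate (UnrelStep Step) F' a' n' ∧
      shadowReachable (UnrelStep Step) F a' n ⊂ shadowReachable (UnrelStep Step) F' a' n' := by
  obtain ⟨E, hEF, hE, hΦ⟩ := hEv n F fun i _ => hF i
  have hFE : ∀ i ≤ n, F i = E i := fun i hi => (hEF i hi).symm
  have hE0 : E 0 = F 0 := hEF 0 n.zero_le
  have ha'E : (E 0).agentState a' = none := hE0 ▸ ha'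
  have hgoodE := hgood.congr hFE
  by_cases hall : ∀ m, ShadowsAnticipate (UnrelStep Step) E a' m
  · exact .inl ⟨E, hE, hE0, hΦ, hall⟩
  push Not at hall
  obtain ⟨K, hK, hK1⟩ := Nat.exists_not_and_succ_of_not_zero_of_exists
    (not_not_intro fun k hk => absurd hk k.not_lt_zero) hall
  rw [not_not] at hK
  have hnK : n ≤ K := by
    by_contra h
    exact hK1 (hgoodE.mono (by omega))
  obtain ⟨A, Y, b, q, hB, hq, hnq, hcase⟩ := exists_step_not_shadowCanReach hP hE ha'E hK hK1
  obtain ⟨F', hF', hF'E, hgood', hss⟩ :=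
    exists_shadowReachable_ssubset hP hE ha'E hK hB hq hnq hcase
  refine .inr ⟨F', K + 1, hF', by rw [hF'E 0 K.zero_le, hE0], hgood',
    ssubset_of_subset_of_ssubset (fun p hp => ?_) hss⟩
  exact (ShadowCanReach.congr hFE hp).mono hP hE ha'E hnK

/-- Each failed attempt enlarges the set of (agent, state) pairs that shadows can reach, which
lies in the finite set `Dom(C_A) × Q`; so some attempt succeeds. -/
theorem exists_fair_execution_forall_shadowsAnticipate [Finite Q] (hP : IsProtocolStep Step)
    (hEv : Eventual (UnrelStep Step) Φ) {C : Config Q M} (ha' : C.agentState a' = none) :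
    ∃ E, IsExecution (UnrelStep Step) E ∧ E 0 = C ∧ Φ E ∧
      ∀ m, ShadowsAnticipate (UnrelStep Step) E a' m := by
  have hfin : (C.agentsDom ×ˢ (Set.univ : Set Q)).Finite := C.finAgents.prod Set.finite_univ
  set N := (C.agentsDom ×ˢ (Set.univ : Set Q)).ncard
  obtain ⟨⟨n, F⟩, ⟨hF, hF0, hgood⟩, hmin⟩ :=
    (measure fun p : ℕ × (ℕ → Config Q M) =>
      N - (shadowReachable (UnrelStep Step) p.2 a' p.1).ncard).wf.has_min
    {p | IsExecution (UnrelStep Step) p.2 ∧ p.2 0 = C ∧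
      ShadowsAnticipate (UnrelStep Step) p.2 a' p.1}
    ⟨(0, fun _ => C), fun _ => .inl rfl, rfl, fun k hk => absurd hk k.not_lt_zero⟩
  dsimp only at hF hF0 hgood
  subst hF0
  rcases exists_fair_or_shadowReachable_ssubset hP hEv hF ha' hgood with h | h
  · exact h
  obtain ⟨F', n', hF', hF'0, hgood', hss⟩ := h
  have hle : (shadowReachable (UnrelStep Step) F' a' n').ncard ≤ N :=
    Set.ncard_le_ncard (hF'0 ▸ shadowReachable_subset _ F' a' n') hfin
  have hlt := Set.ncard_lt_ncard hss (hfin.subset (hF'0 ▸ shadowReachable_subset _ F' a' n'))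
  refine (hmin (n', F') ⟨hF', hF'0, hgood'⟩ ?_).elim
  show N - (shadowReachable (UnrelStep Step) F' a' n').ncard <
    N - (shadowReachable (UnrelStep Step) F a' n).ncard
  omega

end Iteration

theorem unreliable_shadow_permitting_general {Q M Sg : Type} [Fintype Q]
    (P : Protocol Q M Sg) (hP : IsProtocolStep P.Step)
    (hEv : Eventual (UnrelStep P.Step) P.fair) :
    ShadowPermitting (Unreliable P) := by
  intro C
  obtain ⟨a', ha'⟩ := C.finAgents.infinite_compl.nonempty
  have ha'C : C.agentState a' = none := not_not.1 ha'
  obtain ⟨E, hE, rfl, hΦ, hgood⟩ := exists_fair_execution_forall_shadowsAnticipate hP hEv ha'C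
  exact ⟨E, hE, rfl, hΦ, fun a ha =>
    ⟨a', ha', _, isShadowExtension_of_forall_shadowsAnticipate hP hE ha ha'C hgood⟩⟩

/-- Every unreliable protocol is shadow-permitting: if the fairness condition of `P` is
eventual and ensures activity with respect to the unreliable step relation, then the
unreliable protocol corresponding to `P` is shadow-permitting. -/
theorem unreliable_shadow_permitting {Q M Sg : Type} [Fintype Q] [Nonempty Q] [Fintype M]
    [Fintype Sg] [Nonempty Sg] (P : Protocol Q M Sg) (hP : IsProtocolStep P.Step)
    (hEv : Eventual (UnrelStep P.Step) P.fair)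
    (hAct : EnsuresActivity (UnrelStep P.Step) P.fair) :
    ShadowPermitting (Unreliable P) :=
  unreliable_shadow_permitting_general P hP hEv
end

section
/- Every protocol is truncatable: for every protocol there exists a number K such that for every stable consensus configuration C and every state q such that at least K agents of C are in state q, the configuration obtained from C by adding one fresh agent in state q is again a stable consensus. -/
open scoped Classical

section UpperSet

variable {ι : Type*} [DecidableEq ι]

theorem isUpperSet_of_forall_add_single_mem [Finite ι] {S : Set (ι → ℕ)}
    (hS : ∀ v ∈ S, ∀ i, v + Pi.single i 1 ∈ S) : IsUpperSet S := by
  suffices h : ∀ d, ∀ v ∈ S, v + d ∈ S by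
    intro v w hvw hv
    obtain ⟨d, rfl⟩ := exists_add_of_le hvw
    exact h d v hv
  intro d
  induction d using Pi.single_induction with
  | zero => simp
  | add f g hf hg => exact fun v hv => add_assoc v f g ▸ hg _ (hf v hv)
  | single i n =>
    induction n with
    | zero => simp
    | succ n ih =>
      intro v hv
      simpa [Pi.single_add, add_assoc] using hS _ (ih v hv) i

theorem IsUpperSet.exists_bound_add_single [Fintype ι] {S : Set (ι → ℕ)} (hS : IsUpperSet S) :
    ∃ K, ∀ v i, K ≤ v i → v + Pi.single i 1 ∈ S → v ∈ S := by
  have hmin : {u | Minimal (· ∈ S) u}.Finite :=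
    WellQuasiOrderedLE.finite_of_isAntichain (setOfPred_minimal_antichain _)
  obtain ⟨B, hB⟩ := hmin.bddAbove
  refine ⟨Finset.univ.sup B, fun v i hvi hv => ?_⟩
  obtain ⟨u, hu, hu_min⟩ := exists_minimal_le_of_wellFoundedLT (· ∈ S) _ hv
  refine hS (fun j => ?_) hu_min.prop
  by_cases hj : j = i
  · subst hj
    exact (hB hu_min j).trans ((Finset.le_sup (Finset.mem_univ j)).trans hvi)
  · simpa [hj] using hu j

end UpperSet

theorem ncard_fiber_update_of_eq_none {L : Type} {f : ℕ → Option L}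
    (hf : {x | f x ≠ none}.Finite) {a : ℕ} (ha : f a = none) (l l' : L) :
    {x | Function.update f a (some l) x = some l'}.ncard =
      {x | f x = some l'}.ncard + (Pi.single l 1 : L → ℕ) l' := by
  by_cases h : l' = l
  · subst h
    have hfin : {x | f x = some l'}.Finite := hf.subset fun x hx => by simp_all
    have : {x | Function.update f a (some l') x = some l'} = insert a {x | f x = some l'} := by
      ext x
      by_cases hx : x = a <;> simp [hx]
    rw [this, Set.ncard_insert_of_notMem (by simp [ha]) hfin]
    simp
  · have : {x | Function.update f a (some l) x = some l'} = {x | f x = some l'} := by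
      ext x
      by_cases hx : x = a <;> simp [hx, ha, Ne.symm h]
    simp [this, h]

theorem exists_perm_comp_eq {L : Type} {f g : ℕ → Option L} (hf : {x | f x ≠ none}.Finite)
    (hg : {x | g x ≠ none}.Finite)
    (hfg : ∀ l, {x | f x = some l}.ncard = {x | g x = some l}.ncard) :
    ∃ π : Equiv.Perm ℕ, ∀ x, f (π x) = g x := by
  have fiber : ∀ c, Nonempty ({x // g x = c} ≃ {x // f x = c}) := by
    rintro (_ | l)
    · have hinf (h : ℕ → Option L) (hh : {x | h x ≠ none}.Finite) :
          Infinite {x // h x = none} :=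
        (by simpa [Set.compl_ofPred] using hh.infinite_compl : {x | h x = none}.Infinite).to_subtype
      have := hinf g hg
      have := hinf f hf
      exact Cardinal.eq.1 (by rw [Cardinal.mk_eq_aleph0, Cardinal.mk_eq_aleph0])
    · have : Finite {x // g x = some l} :=
        (hg.subset fun x (hx : g x = some l) => by simp [hx]).to_subtype
      have : Finite {x // f x = some l} :=
        (hf.subset fun x (hx : f x = some l) => by simp [hx]).to_subtype
      exact Finite.card_eq.1 (hfg l).symm
  exact ⟨Equiv.ofFiberEquiv fun c => (fiber c).some, Equiv.ofFiberEquiv_map _⟩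

namespace Config

variable {Q M : Type}

noncomputable def count (C : Config Q M) : Q ⊕ M → ℕ := Sum.elim C.numInState C.supply

theorem count_setAgent {C : Config Q M} {a : ℕ} (ha : C.agentState a = none) (q : Q) :
    (C.setAgent a (some q)).count = C.count + Pi.single (Sum.inl q) 1 := by
  ext (r | m)
  · simpa [count, numInState, setAgent, Pi.single_apply] using
      ncard_fiber_update_of_eq_none C.finAgents ha q r
  · simp [count, supply, setAgent]

theorem count_setPacket {C : Config Q M} {p : ℕ} (hp : C.packetMsg p = none) (m : M) :
    (C.setPacket p (some m)).count = C.count + Pi.single (Sum.inr m) 1 := by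
  ext (r | m')
  · simp [count, numInState, setPacket]
  · simpa [count, supply, setPacket, Pi.single_apply] using
      ncard_fiber_update_of_eq_none C.finPackets hp m m'

theorem exists_rename_eq_of_count_eq {C D : Config Q M} (h : C.count = D.count) :
    ∃ πA πP : Equiv.Perm ℕ, C.rename πA πP = D := by
  obtain ⟨πA, hA⟩ := exists_perm_comp_eq C.finAgents D.finAgents fun q => congrFun h (.inl q)
  obtain ⟨πP, hP⟩ := exists_perm_comp_eq C.finPackets D.finPackets fun m => congrFun h (.inr m)
  exact ⟨πA, πP, Config.ext (funext hA) (funext hP)⟩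

theorem exists_agentState_eq_none (C : Config Q M) : ∃ a, C.agentState a = none := by
  simpa using C.finAgents.exists_notMem

theorem exists_packetMsg_eq_none (C C' : Config Q M) :
    ∃ p, C.packetMsg p = none ∧ C'.packetMsg p = none := by
  simpa [not_or] using (C.finPackets.union C'.finPackets).exists_notMem

end Config

section Reachability

variable {Q M : Type} {Step : StepRel Q M}

theorem IsProtocolStep.agentState_eq_none (hP : IsProtocolStep Step) {C C' : Config Q M}
    {A : Set ℕ} (h : Step C A C') {a : ℕ} (ha : C.agentState a = none) :
    C'.agentState a = none := by
  have : a ∉ C'.agentsDom := hP.agent_conservation h ▸ by simpa [Config.agentsDom] using ha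
  simpa [Config.agentsDom] using this

theorem Reaches.rename (hP : IsProtocolStep Step) (πA πP : Equiv.Perm ℕ) {C D : Config Q M}
    (h : Reaches Step C D) : Reaches Step (C.rename πA πP) (D.rename πA πP) :=
  Relation.ReflTransGen.lift (p := stepTo Step) (fun E : Config Q M => E.rename πA πP)
    (fun _ _ ⟨_, hA⟩ => ⟨_, hP.anonymity πA πP hA⟩) _ _ h

theorem Reaches.setAgent (hP : IsProtocolStep Step) {C D : Config Q M} (h : Reaches Step C D)
    {a : ℕ} (ha : C.agentState a = none) (q : Q) :
    ∃ q', Reaches Step (C.setAgent a (some q)) (D.setAgent a (some q')) ∧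
      D.agentState a = none := by
  induction h with
  | refl => exact ⟨q, .refl, ha⟩
  | tail _ hstep ih =>
    obtain ⟨q', hreach, hBa⟩ := ih
    obtain ⟨A, hA⟩ := hstep
    have hDa := hP.agentState_eq_none hA hBa
    obtain ⟨q'', hA'⟩ := hP.add_passive a q' hA hBa hDa
    exact ⟨q'', hreach.tail ⟨A, hA'⟩, hDa⟩

end Reachability

section Dissent

variable {Q M : Type}

def ReachesDissent (Step : StepRel Q M) (out : Q → Bool) (b : Bool) (C : Config Q M) : Prop :=
  ∃ D, Reaches Step C D ∧ ¬ IsConsensus out D b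

variable {Step : StepRel Q M} {out : Q → Bool} {b : Bool}

theorem isStableConsensus_iff_not_reachesDissent {C : Config Q M} :
    IsStableConsensus Step out C b ↔ ¬ ReachesDissent Step out b C := by
  simp [IsStableConsensus, ReachesDissent]

namespace ReachesDissent

variable {C : Config Q M}

theorem rename (hP : IsProtocolStep Step) (hC : ReachesDissent Step out b C)
    (πA πP : Equiv.Perm ℕ) : ReachesDissent Step out b (C.rename πA πP) := by
  obtain ⟨D, hCD, hD⟩ := hC
  refine ⟨D.rename πA πP, hCD.rename hP πA πP, fun hcons => hD fun a q ha => ?_⟩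
  exact hcons (πA.symm a) q (by simpa [Config.rename] using ha)

theorem of_count_eq (hP : IsProtocolStep Step) (hC : ReachesDissent Step out b C)
    {D : Config Q M} (h : C.count = D.count) : ReachesDissent Step out b D := by
  obtain ⟨πA, πP, rfl⟩ := Config.exists_rename_eq_of_count_eq h
  exact hC.rename hP πA πP

theorem setAgent (hP : IsProtocolStep Step) (hC : ReachesDissent Step out b C) {a : ℕ}
    (ha : C.agentState a = none) (q : Q) : ReachesDissent Step out b (C.setAgent a (some q)) := by
  obtain ⟨D, hCD, hD⟩ := hC
  obtain ⟨q', hreach, hDa⟩ := hCD.setAgent hP ha q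
  refine ⟨_, hreach, fun hcons => hD fun x r hx => hcons x r ?_⟩
  have hxa : x ≠ a := by rintro rfl; simp [hDa] at hx
  simpa [Config.setAgent, hxa] using hx

/-- The added packet gets a name that stays unused along the first step; since dissent only
depends on counts, the name does not matter. -/
theorem setPacket (hP : IsProtocolStep Step) (hC : ReachesDissent Step out b C) {p : ℕ}
    (hp : C.packetMsg p = none) (m : M) : ReachesDissent Step out b (C.setPacket p (some m)) := by
  obtain ⟨D, hCD, hD⟩ := hC
  induction hCD using Relation.ReflTransGen.head_induction_on generalizing p with
  | refl => exact ⟨_, .refl, hD⟩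
  | @head C C₁ hstep _ ih =>
    obtain ⟨A, hA⟩ := hstep
    obtain ⟨p', hp'C, hp'C₁⟩ := Config.exists_packetMsg_eq_none C C₁
    obtain ⟨E, hC₁E, hE⟩ := ih hp'C₁
    have hdis : ReachesDissent Step out b (C.setPacket p' (some m)) :=
      ⟨E, .head ⟨A, hP.ignore_packets p' m hA hp'C hp'C₁⟩ hC₁E, hE⟩
    exact hdis.of_count_eq hP (by rw [Config.count_setPacket hp'C, Config.count_setPacket hp])

theorem exists_count_eq_add_single (hP : IsProtocolStep Step) (hC : ReachesDissent Step out b C)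
    (i : Q ⊕ M) : ∃ D, ReachesDissent Step out b D ∧ D.count = C.count + Pi.single i 1 := by
  rcases i with q | m
  · obtain ⟨a, ha⟩ := C.exists_agentState_eq_none
    exact ⟨_, hC.setAgent hP ha q, Config.count_setAgent ha q⟩
  · obtain ⟨p, hp, -⟩ := Config.exists_packetMsg_eq_none C C
    exact ⟨_, hC.setPacket hP hp m, Config.count_setPacket hp m⟩

end ReachesDissent

end Dissent

theorem isUpperSet_count_image_reachesDissent {Q M : Type} [Finite Q] [Finite M]
    {Step : StepRel Q M} (hP : IsProtocolStep Step) (out : Q → Bool) (b : Bool) :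
    IsUpperSet (Config.count '' {C | ReachesDissent Step out b C}) :=
  isUpperSet_of_forall_add_single_mem fun _ ⟨_, hC, hv⟩ i =>
    hv ▸ hC.exists_count_eq_add_single hP i

theorem every_protocol_truncatable_general {Q M Sg : Type} [Fintype Q] [Fintype M]
    (P : Protocol Q M Sg) (hP : IsProtocolStep P.Step) :
    ∃ K, TruncatableWith P.Step P.out K := by
  choose K hK using fun b =>
    (isUpperSet_count_image_reachesDissent hP P.out b).exists_bound_add_single
  refine ⟨Finset.univ.sup K, fun C b q hC hq a ha => ?_⟩
  rw [isStableConsensus_iff_not_reachesDissent] at hC ⊢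
  intro hdis
  obtain ⟨D, hD, hDC⟩ := hK b C.count (.inl q) ((Finset.le_sup (Finset.mem_univ b)).trans hq)
    ⟨_, hdis, C.count_setAgent ha q⟩
  exact hC (hD.of_count_eq hP hDC)

/-- Every protocol is truncatable: there is a constant `K` such that adding a fresh agent
in a state already represented by at least `K` agents of a stable consensus again yields
a stable consensus. -/
theorem every_protocol_truncatable {Q M Sg : Type} [Fintype Q] [Nonempty Q] [Fintype M]
    [Fintype Sg] [Nonempty Sg] (P : Protocol Q M Sg) (hP : IsProtocolStep P.Step) :
    ∃ K, TruncatableWith P.Step P.out K :=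
  every_protocol_truncatable_general P hP
end
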